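/- arXiv:2010.12901 — 4 statements merged into one kernel-verified Lean document; each statement's English description precedes it below -/
import Mathlib

section
/- Let F(x,y) = (−(x − s(y))/2 + (√3/2)y, −(√3/2)(x − s(y)) − y/2). A point (x,y) ∈ ℝ² has some iterate landing on the discontinuity line {y = 0} (i.e. there exists n ∈ ℕ with the second coordinate of Fⁿ(x,y) equal to 0) if and only if (x,y) lies on the grid 𝔉, i.e. there exists k ∈ ℤ with y = √3(x − 2k), or ℓ ∈ ℤ with y = √3ℓ, or m ∈ ℤ with y = −√3(x − 2m − 1). -/
noncomputable def s (y : ℝ) : ℝ := if 0 ≤ y then 1 else -1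

/-- The map `F_α` of the paper for `α = 2π/3`. -/
noncomputable def F (q : ℝ × ℝ) : ℝ × ℝ :=
  (-(q.1 - s q.2) / 2 + (Real.sqrt 3 / 2) * q.2,
   -(Real.sqrt 3 / 2) * (q.1 - s q.2) - q.2 / 2)

/-!
In the coordinate `v = (x - y/√3)/2`, the iterates of `(x, y)` give a sequence with
`v (n+1) = yₙ/√3` and `v (n+2) + v (n+1) + v n = s (v (n+1)) / 2`. The three families of grid lines
are where `v 0`, `v 1` or `v 2` is an integer, and `v (n+3) - v n` is always an integer, so
integrality of `v n` depends only on `n mod 3`; this gives the forward direction. Conversely, along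
an integral residue class the values `v (3j)` move by steps of at most `1`, so if they never vanish
they keep one sign, say positive. Then the middle terms `v (3j+1)` never decrease: once one of them
is nonnegative, `v (3j)` drops by exactly `1` every three steps, and while they stay negative,
`v (3j) + v (3j+1)` grows by `1` each time, which eventually pushes them up. Either way `v (3j)`
cannot stay positive.
-/

/-- Leaving the value at `0` free makes `IsSignRecurrence` invariant under `σ ↦ -σ (-·)`,
`v ↦ -v`, which reduces the negative case to the positive one. -/
structure IsSignChoice (σ : ℝ → ℝ) : Prop where
  eq_one_or_eq_neg_one : ∀ u, σ u = 1 ∨ σ u = -1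
  of_pos : ∀ {u}, 0 < u → σ u = 1
  of_neg : ∀ {u}, u < 0 → σ u = -1

namespace IsSignChoice

variable {σ : ℝ → ℝ}

lemma nonneg_of_eq_one (hσ : IsSignChoice σ) {u : ℝ} (h : σ u = 1) : 0 ≤ u :=
  not_lt.1 fun hu => by norm_num [hσ.of_neg hu] at h

lemma nonpos_of_eq_neg_one (hσ : IsSignChoice σ) {u : ℝ} (h : σ u = -1) : u ≤ 0 :=
  not_lt.1 fun hu => by norm_num [hσ.of_pos hu] at h

lemma neg (hσ : IsSignChoice σ) : IsSignChoice fun u => -σ (-u) where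
  eq_one_or_eq_neg_one u := by
    rcases hσ.eq_one_or_eq_neg_one (-u) with h | h <;> simp [h]
  of_pos hu := by simp [hσ.of_neg (neg_lt_zero.2 hu)]
  of_neg hu := by simp [hσ.of_pos (neg_pos.2 hu)]

lemma neg_one_le (hσ : IsSignChoice σ) (u : ℝ) : -1 ≤ σ u := by
  rcases hσ.eq_one_or_eq_neg_one u with h | h <;> norm_num [h]

lemma le_one (hσ : IsSignChoice σ) (u : ℝ) : σ u ≤ 1 := by
  rcases hσ.eq_one_or_eq_neg_one u with h | h <;> norm_num [h]

lemma exists_int_sub_div_two (hσ : IsSignChoice σ) (a b : ℝ) : ∃ d : ℤ, (σ a - σ b) / 2 = d := by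
  rcases hσ.eq_one_or_eq_neg_one a with ha | ha <;>
  rcases hσ.eq_one_or_eq_neg_one b with hb | hb
  exacts [⟨0, by norm_num [ha, hb]⟩, ⟨1, by norm_num [ha, hb]⟩, ⟨-1, by norm_num [ha, hb]⟩,
    ⟨0, by norm_num [ha, hb]⟩]

end IsSignChoice

lemma isSignChoice_s : IsSignChoice s where
  eq_one_or_eq_neg_one u := by unfold s; split_ifs <;> simp
  of_pos hu := if_pos hu.le
  of_neg hu := if_neg (not_le.2 hu)

lemma s_div_of_pos (y : ℝ) {c : ℝ} (hc : 0 < c) : s (y / c) = s y := by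
  simp only [s, div_nonneg_iff, hc.le, hc.not_ge, and_true, and_false, or_false]

lemma eq_add_of_forall_succ_eq_add_one {f : ℕ → ℝ} (h : ∀ j, f (j + 1) = f j + 1) (j : ℕ) :
    f j = f 0 + j := by
  induction j with
  | zero => simp
  | succ j ih => rw [h, ih]; push_cast; ring

def IsSignRecurrence (σ : ℝ → ℝ) (v : ℕ → ℝ) : Prop :=
  ∀ n, v (n + 2) + v (n + 1) + v n = σ (v (n + 1)) / 2

namespace IsSignRecurrence

variable {σ : ℝ → ℝ} {v : ℕ → ℝ}

lemma eq (hv : IsSignRecurrence σ v) (n : ℕ) :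
    v (n + 2) = σ (v (n + 1)) / 2 - v n - v (n + 1) := by
  linarith [hv n]

lemma add_three (hv : IsSignRecurrence σ v) (n : ℕ) :
    v (n + 3) = v n + (σ (v (n + 2)) - σ (v (n + 1))) / 2 := by
  linarith [hv n, hv (n + 1)]

lemma three_mul_succ (hv : IsSignRecurrence σ v) (j : ℕ) :
    v (3 * (j + 1)) = v (3 * j) + (σ (v (3 * j + 2)) - σ (v (3 * j + 1))) / 2 :=
  hv.add_three (3 * j)

lemma three_mul_succ_add_one (hv : IsSignRecurrence σ v) (j : ℕ) :
    v (3 * (j + 1) + 1) = v (3 * j + 1) + (σ (v (3 * (j + 1))) - σ (v (3 * j + 2))) / 2 :=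
  hv.add_three (3 * j + 1)

lemma shift (hv : IsSignRecurrence σ v) (N : ℕ) : IsSignRecurrence σ fun n => v (N + n) :=
  fun n => hv (N + n)

lemma neg (hv : IsSignRecurrence σ v) : IsSignRecurrence (fun u => -σ (-u)) (-v) := fun n => by
  simp only [Pi.neg_apply, neg_neg]
  linarith [hv n]

lemma isInt_add_three_iff (hσ : IsSignChoice σ) (hv : IsSignRecurrence σ v) (n : ℕ) :
    (∃ z : ℤ, v (n + 3) = z) ↔ ∃ z : ℤ, v n = z := by
  obtain ⟨d, hd⟩ := hσ.exists_int_sub_div_two (v (n + 2)) (v (n + 1))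
  rw [hv.add_three, hd]
  constructor <;> rintro ⟨z, hz⟩
  exacts [⟨z - d, by push_cast; linarith⟩, ⟨z + d, by push_cast; linarith⟩]

lemma isInt_add_mul_three_iff (hσ : IsSignChoice σ) (hv : IsSignRecurrence σ v) (n j : ℕ) :
    (∃ z : ℤ, v (n + 3 * j) = z) ↔ ∃ z : ℤ, v n = z := by
  induction j with
  | zero => rfl
  | succ j ih => exact (hv.isInt_add_three_iff hσ (n + 3 * j)).trans ih

lemma isInt_mod_three_iff (hσ : IsSignChoice σ) (hv : IsSignRecurrence σ v) (n : ℕ) :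
    (∃ z : ℤ, v n = z) ↔ ∃ z : ℤ, v (n % 3) = z := by
  conv_lhs => rw [← Nat.mod_add_div n 3]
  exact hv.isInt_add_mul_three_iff hσ _ _

section HalfLt

variable (hσ : IsSignChoice σ) (hv : IsSignRecurrence σ v) (hA : ∀ j, 1 / 2 < v (3 * j))
include hσ hv hA

lemma not_exists_sign_eq_one : ¬ ∃ J, σ (v (3 * J + 1)) = 1 := by
  rintro ⟨J, hJ⟩
  have step : ∀ j, σ (v (3 * j + 1)) = 1 →
      v (3 * (j + 1)) = v (3 * j) - 1 ∧ σ (v (3 * (j + 1) + 1)) = 1 := by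
    intro j ht
    have ht₀ := hσ.nonneg_of_eq_one ht
    have hc : σ (v (3 * j + 2)) = -1 := hσ.of_neg (by rw [hv.eq, ht]; linarith [hA j])
    refine ⟨by rw [hv.three_mul_succ, hc, ht]; ring, hσ.of_pos ?_⟩
    rw [hv.three_mul_succ_add_one, hc, hσ.of_pos (one_half_pos.trans (hA (j + 1)))]
    linarith
  have hmid : ∀ i, σ (v (3 * (J + i) + 1)) = 1 := by
    intro i
    induction i with
    | zero => exact hJ
    | succ i ih => exact (step _ ih).2
  have hdrop := eq_add_of_forall_succ_eq_add_one (f := fun i => -v (3 * (J + i)))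
    fun i => by simp only [← add_assoc, (step _ (hmid i)).1]; ring
  simp only [add_zero] at hdrop
  obtain ⟨i, hi⟩ := exists_nat_gt (v (3 * J))
  linarith [hdrop i, hA (J + i)]

lemma not_forall_sign_eq_neg_one : ¬ ∀ j, σ (v (3 * j + 1)) = -1 := by
  intro ht
  have hA' : ∀ j, σ (v (3 * j)) = 1 := fun j => hσ.of_pos (one_half_pos.trans (hA j))
  have hsum := eq_add_of_forall_succ_eq_add_one (f := fun j => v (3 * j) + v (3 * j + 1)) fun j => by
    rw [hv.three_mul_succ_add_one, hA', hv.three_mul_succ, ht]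
    ring
  obtain ⟨j₀, hj₀⟩ := exists_nat_gt (-(v 0 + v 1))
  have hrise := eq_add_of_forall_succ_eq_add_one (f := fun i => v (3 * (j₀ + i) + 1)) fun i => by
    have hc : σ (v (3 * (j₀ + i) + 2)) = -1 := by
      refine hσ.of_neg ?_
      have := hsum (j₀ + i)
      push_cast at this
      rw [hv.eq, ht]
      linarith
    simp only [← add_assoc]
    rw [hv.three_mul_succ_add_one, hA', hc]
    ring
  obtain ⟨i, hi⟩ := exists_nat_gt (-v (3 * j₀ + 1))
  simp only [add_zero] at hrise
  linarith [hrise i, hσ.nonpos_of_eq_neg_one (ht (j₀ + i))]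

end HalfLt

lemma not_forall_half_lt (hσ : IsSignChoice σ) (hv : IsSignRecurrence σ v) :
    ¬ ∀ j, 1 / 2 < v (3 * j) := fun hA =>
  hv.not_forall_sign_eq_neg_one hσ hA fun j =>
    (hσ.eq_one_or_eq_neg_one _).resolve_left fun h => hv.not_exists_sign_eq_one hσ hA ⟨j, h⟩

lemma exists_eq_zero_of_pos (hσ : IsSignChoice σ) (hv : IsSignRecurrence σ v)
    (h0 : ∃ z : ℤ, v 0 = z) (hpos : 0 < v 0) : ∃ j, v (3 * j) = 0 := by
  by_contra! hne
  have hone : ∀ j, 0 < v (3 * j) → 1 ≤ v (3 * j) := fun j hj => by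
    obtain ⟨z, hz⟩ := (hv.isInt_add_mul_three_iff hσ 0 j).2 h0
    rw [zero_add] at hz
    rw [hz] at hj ⊢
    have : 0 < z := Int.cast_pos.1 hj
    exact_mod_cast (show 1 ≤ z by omega)
  refine hv.not_forall_half_lt hσ fun j => ?_
  suffices 0 < v (3 * j) by linarith [hone j this]
  induction j with
  | zero => exact hpos
  | succ j ih =>
    refine lt_of_le_of_ne ?_ (hne (j + 1)).symm
    rw [hv.three_mul_succ]
    linarith [hone j ih, hσ.neg_one_le (v (3 * j + 2)), hσ.le_one (v (3 * j + 1))]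

theorem exists_eq_zero (hσ : IsSignChoice σ) (hv : IsSignRecurrence σ v)
    (h0 : ∃ z : ℤ, v 0 = z) : ∃ j, v (3 * j) = 0 := by
  rcases lt_trichotomy (v 0) 0 with hneg | hzero | hpos
  · obtain ⟨z, hz⟩ := h0
    obtain ⟨j, hj⟩ := hv.neg.exists_eq_zero_of_pos hσ.neg ⟨-z, by simp [hz]⟩ (by simpa using hneg)
    exact ⟨j, by simpa using hj⟩
  · exact ⟨0, hzero⟩
  · exact hv.exists_eq_zero_of_pos hσ h0 hpos

theorem exists_succ_eq_zero_iff (hσ : IsSignChoice σ) (hv : IsSignRecurrence σ v) :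
    (∃ n, v (n + 1) = 0) ↔ (∃ z : ℤ, v 0 = z) ∨ (∃ z : ℤ, v 1 = z) ∨ (∃ z : ℤ, v 2 = z) := by
  constructor
  · rintro ⟨n, hn⟩
    have hmod := (hv.isInt_mod_three_iff hσ (n + 1)).1 ⟨0, by simp [hn]⟩
    rcases (by omega : (n + 1) % 3 = 0 ∨ (n + 1) % 3 = 1 ∨ (n + 1) % 3 = 2) with h | h | h <;>
      rw [h] at hmod <;> simp only [hmod, true_or, or_true]
  · have hit : ∀ i, (∃ z : ℤ, v i = z) → ∃ n, v (n + 1) = 0 := fun i hi => by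
      obtain ⟨j, hj⟩ := (hv.shift (i + 3)).exists_eq_zero hσ ((hv.isInt_add_three_iff hσ i).2 hi)
      exact ⟨i + 2 + 3 * j, by rwa [show i + 2 + 3 * j + 1 = i + 3 + 3 * j by omega]⟩
    rintro (h | h | h)
    exacts [hit 0 h, hit 1 h, hit 2 h]

end IsSignRecurrence

lemma sqrt_three_ne_zero : √3 ≠ 0 := by positivity

noncomputable def gridCoord (p : ℝ × ℝ) : ℝ := (p.1 - p.2 / √3) / 2

lemma gridCoord_F (p : ℝ × ℝ) : gridCoord (F p) = p.2 / √3 := by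
  have h3 : √3 ^ 2 = 3 := Real.sq_sqrt (by norm_num)
  simp only [gridCoord, F]
  field_simp
  linear_combination p.2 * h3

lemma snd_F_div_sqrt_three (p : ℝ × ℝ) :
    (F p).2 / √3 = s p.2 / 2 - gridCoord p - p.2 / √3 := by
  simp only [gridCoord, F]
  field_simp
  ring

lemma isSignRecurrence_gridCoord_iterate (q : ℝ × ℝ) :
    IsSignRecurrence s fun n => gridCoord (F^[n] q) := fun n => by
  simp only [Function.iterate_succ_apply', gridCoord_F, snd_F_div_sqrt_three,
    s_div_of_pos _ (by positivity : (0 : ℝ) < √3)]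
  ring

lemma snd_iterate_eq_zero_iff (q : ℝ × ℝ) (n : ℕ) :
    (F^[n] q).2 = 0 ↔ gridCoord (F^[n + 1] q) = 0 := by
  simp [Function.iterate_succ_apply', gridCoord_F]

lemma grid_sqrt_three_mul_iff (x b : ℝ) :
    ((∃ k : ℤ, √3 * b = √3 * (x - 2 * k)) ∨ (∃ ℓ : ℤ, √3 * b = √3 * ℓ) ∨
      (∃ m : ℤ, √3 * b = -√3 * (x - 2 * m - 1))) ↔
    (∃ z : ℤ, (x - b) / 2 = z) ∨ (∃ z : ℤ, b = z) ∨ (∃ z : ℤ, s b / 2 - (x - b) / 2 - b = z) := by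
  simp only [neg_mul, ← mul_neg, mul_right_inj' sqrt_three_ne_zero]
  refine or_congr ⟨fun ⟨k, hk⟩ => ⟨k, by linarith⟩, fun ⟨z, hz⟩ => ⟨z, by linarith⟩⟩ <|
    or_congr Iff.rfl ?_
  rcases isSignChoice_s.eq_one_or_eq_neg_one b with h | h <;> rw [h] <;> constructor <;>
    rintro ⟨m, hm⟩
  exacts [⟨-m, by push_cast; linarith⟩, ⟨-m, by push_cast; linarith⟩,
    ⟨-m - 1, by push_cast; linarith⟩, ⟨-m - 1, by push_cast; linarith⟩]

/-- A point has some iterate landing on `{y = 0}` iff it lies on the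
trihexagonal grid `𝔉`. -/
theorem critical_set_two_pi_div_three (x y : ℝ) :
    (∃ n : ℕ, (F^[n] (x, y)).2 = 0) ↔
      ((∃ k : ℤ, y = Real.sqrt 3 * (x - 2 * k)) ∨
       (∃ ℓ : ℤ, y = Real.sqrt 3 * ℓ) ∨
       (∃ m : ℤ, y = -Real.sqrt 3 * (x - 2 * m - 1))) := by
  obtain ⟨b, rfl⟩ : ∃ b, y = √3 * b := ⟨y / √3, (mul_div_cancel₀ y sqrt_three_ne_zero).symm⟩
  set v : ℕ → ℝ := fun n => gridCoord (F^[n] (x, √3 * b))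
  have hv : IsSignRecurrence s v := isSignRecurrence_gridCoord_iterate _
  have hv₀ : v 0 = (x - b) / 2 := by
    simp [v, gridCoord, mul_div_cancel_left₀ _ sqrt_three_ne_zero]
  have hv₁ : v 1 = b := (gridCoord_F _).trans (mul_div_cancel_left₀ _ sqrt_three_ne_zero)
  have hv₂ : v 2 = s b / 2 - (x - b) / 2 - b := by rw [hv.eq 0, hv₀, hv₁]
  have hhit := hv.exists_succ_eq_zero_iff isSignChoice_s
  rw [hv₀, hv₁, hv₂] at hhit
  rw [grid_sqrt_three_mul_iff, ← hhit]
  simp only [snd_iterate_eq_zero_iff, v]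
end

section
/- Let F(x,y) = (−(x − s(y))/2 + (√3/2)y, −(√3/2)(x − s(y)) − y/2), and let (x,y) ∈ U = ℝ² ∖ 𝔉 with k = B(x,y), ℓ = C(y), m = D(x,y) and c = V(x,y). Then F^{9c+3}(x,y) = (x,y). Moreover, letting z denote the center of the tile containing (x,y), namely z = (2k+ℓ+1/2, √3(ℓ+1/6)) if m = k+ℓ, z = (2k+ℓ+3/2, √3(ℓ+1/2)) if m = k+ℓ+1, and z = (2k+ℓ+5/2, √3(ℓ+5/6)) if m = k+ℓ+2, if (x,y) ≠ z, then the minimal period of (x,y) under F equals 9c+3. -/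
noncomputable def B (q : ℝ × ℝ) : ℤ := ⌊(3 * q.1 - Real.sqrt 3 * q.2) / 6⌋
noncomputable def C (q : ℝ × ℝ) : ℤ := ⌊Real.sqrt 3 * q.2 / 3⌋
noncomputable def D (q : ℝ × ℝ) : ℤ := ⌊(3 * q.1 + Real.sqrt 3 * q.2 + 3) / 6⌋

noncomputable def V (q : ℝ × ℝ) : ℤ :=
  max (max (|B q - C q + D q|) (|B q + C q + D q + 1| - 1)) (|-B q + C q + D q|)

/-! ### Auxiliary integer dynamics -/

/-- The induced map on tile indices. -/
def Tm (e : ℤ) (p : ℤ × ℤ) : ℤ × ℤ :=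
  (p.2, -p.1 - p.2 - e - (if p.2 < 0 then 1 else 0))

/-- Position `j` on the hexagonal ring of radius `A + Bv` is the tile `(k, l)`. -/
def OnRing (A Bv j k l : ℤ) : Prop :=
  (0 ≤ j ∧ j ≤ 3*A + 3*Bv) ∧
  ((j ≤ A - 1 ∧ k = j - A ∧ l = -1 - j) ∨
   (A - 1 ≤ j ∧ j ≤ A + Bv ∧ k = j - A ∧ l = -A) ∨
   (A + Bv ≤ j ∧ j ≤ 2*A + Bv ∧ k = Bv ∧ l = j - 2*A - Bv) ∨
   (2*A + Bv ≤ j ∧ j ≤ 2*A + 2*Bv ∧ k = 2*A + 2*Bv - j ∧ l = j - 2*A - Bv) ∨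
   (2*A + 2*Bv ≤ j ∧ j ≤ 3*A + 2*Bv ∧ k = 2*A + 2*Bv - j ∧ l = Bv) ∨
   (3*A + 2*Bv ≤ j ∧ j ≤ 3*A + 3*Bv ∧ k = -A ∧ l = 3*A + 3*Bv - j))

set_option maxHeartbeats 1600000 in
lemma Tm3_eq (e k l : ℤ) : Tm e (Tm e (Tm e (k, l))) =
    (k + (if l < 0 then 1 else 0)
       - (if -k - l - e - (if l < 0 then 1 else 0) < 0 then 1 else 0),
     l + (if -k - l - e - (if l < 0 then 1 else 0) < 0 then 1 else 0)
       - (if k + (if l < 0 then 1 else 0)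
            - (if -k - l - e - (if l < 0 then 1 else 0) < 0 then 1 else 0) < 0
          then 1 else 0)) := by
  simp only [Tm]
  split_ifs <;> simp_all <;> omega

set_option maxHeartbeats 1600000 in
lemma ring_fun {A Bv j k l k' l' : ℤ} (h1 : 0 ≤ Bv) (h2 : A - Bv ≤ 2) (h3 : Bv ≤ A)
    (h : OnRing A Bv j k l) (h' : OnRing A Bv j k' l') :
    k = k' ∧ l = l' := by
  unfold OnRing at h h'; omega

set_option maxHeartbeats 1600000 in
lemma ring_inj {A Bv a b k l : ℤ} (h1 : 0 ≤ Bv) (h2 : A - Bv ≤ 2) (h3 : Bv ≤ A)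
    (h : OnRing A Bv a k l) (h' : OnRing A Bv b k l) : a = b := by
  unfold OnRing at h h'; omega

set_option maxHeartbeats 1600000 in
lemma ring_step {A Bv j k l k' l' : ℤ} (h1 : 0 ≤ Bv) (h2 : A - Bv ≤ 2) (h3 : Bv ≤ A)
    (h : OnRing A Bv j k l) (hj : j < 3*A + 3*Bv)
    (hT : Tm (A-Bv) (Tm (A-Bv) (Tm (A-Bv) (k, l))) = (k', l')) :
    OnRing A Bv (j+1) k' l' := by
  rw [Tm3_eq, Prod.mk.injEq] at hT
  obtain ⟨hk, hl⟩ := hT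
  obtain ⟨⟨hb0, hb1⟩, hp⟩ := h
  unfold OnRing
  rcases hp with hp|hp|hp|hp|hp|hp <;> split_ifs at hk hl <;> omega

set_option maxHeartbeats 1600000 in
lemma ring_wrap {A Bv k l k' l' : ℤ} (h1 : 0 ≤ Bv) (h2 : A - Bv ≤ 2) (h3 : Bv ≤ A)
    (h : OnRing A Bv (3*A + 3*Bv) k l)
    (hT : Tm (A-Bv) (Tm (A-Bv) (Tm (A-Bv) (k, l))) = (k', l')) :
    OnRing A Bv 0 k' l' := by
  rw [Tm3_eq, Prod.mk.injEq] at hT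
  obtain ⟨hk, hl⟩ := hT
  obtain ⟨⟨hb0, hb1⟩, hp⟩ := h
  unfold OnRing
  rcases hp with hp|hp|hp|hp|hp|hp <;> split_ifs at hk hl <;> omega

set_option maxHeartbeats 1600000 in
lemma ring_cover {A Bv k l : ℤ} (h1 : 0 ≤ Bv) (h2 : A - Bv ≤ 2) (h3 : Bv ≤ A)
    (hc : max (max ((2*k+(A-Bv)).natAbs : ℤ) (((2*k+2*l+(A-Bv)+1).natAbs : ℤ) - 1))
          ((2*l+(A-Bv)).natAbs : ℤ) = A + Bv) :
    ∃ j, OnRing A Bv j k l := by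
  have d1 : -(A+Bv) ≤ 2*k+(A-Bv) ∧ 2*k+(A-Bv) ≤ A + Bv := by omega
  have d2 : -(A+Bv) - 1 ≤ 2*k+2*l+(A-Bv)+1 ∧ 2*k+2*l+(A-Bv)+1 ≤ A + Bv + 1 := by omega
  have d3 : -(A+Bv) ≤ 2*l+(A-Bv) ∧ 2*l+(A-Bv) ≤ A + Bv := by omega
  have d4 : 2*k+(A-Bv) = A + Bv ∨ 2*k+(A-Bv) = -(A+Bv) ∨
      2*k+2*l+(A-Bv)+1 = A+Bv+1 ∨ 2*k+2*l+(A-Bv)+1 = -(A+Bv)-1 ∨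
      2*l+(A-Bv) = A+Bv ∨ 2*l+(A-Bv) = -(A+Bv) := by omega
  clear hc
  refine ⟨if l = -A ∨ k + l = -A - 1 then k + A
    else if k = Bv ∨ k + l = Bv then l + 2*A + Bv
    else if l = Bv then 2*A + 2*Bv - k else 3*A + 3*Bv - l, ?_⟩
  unfold OnRing
  split_ifs <;> omega

lemma ring_stepmod {A Bv j k l k' l' : ℤ} (h1 : 0 ≤ Bv) (h2 : A - Bv ≤ 2) (h3 : Bv ≤ A)
    (h : OnRing A Bv j k l)
    (hT : Tm (A-Bv) (Tm (A-Bv) (Tm (A-Bv) (k, l))) = (k', l')) :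
    OnRing A Bv ((j+1) % (3*A+3*Bv+1)) k' l' := by
  rcases lt_or_eq_of_le h.1.2 with hlt | heq
  · rw [Int.emod_eq_of_lt (by have := h.1.1; omega) (by omega)]
    exact ring_step h1 h2 h3 h hlt hT
  · rw [show j + 1 = 3*A+3*Bv+1 by omega, Int.emod_self]
    rw [heq] at h
    exact ring_wrap h1 h2 h3 h hT

lemma ring_iter {A Bv : ℤ} (h1 : 0 ≤ Bv) (h2 : A - Bv ≤ 2) (h3 : Bv ≤ A) :
    ∀ (n : ℕ) (j k l : ℤ), OnRing A Bv j k l →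
      OnRing A Bv ((j + n) % (3*A+3*Bv+1)) ((Tm (A-Bv))^[3*n] (k, l)).1
        ((Tm (A-Bv))^[3*n] (k, l)).2 := by
  intro n
  induction n with
  | zero =>
      intro j k l h
      have hidx : (j + ((0:ℕ):ℤ)) % (3*A+3*Bv+1) = j := by
        push_cast
        rw [add_zero, Int.emod_eq_of_lt h.1.1 (by have := h.1.2; omega)]
      rw [hidx]
      simpa using h
  | succ n ih =>
      intro j k l h
      have hstep := ring_stepmod h1 h2 h3 h
        (Prod.mk.eta (p := Tm (A-Bv) (Tm (A-Bv) (Tm (A-Bv) (k, l))))).symm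
      have hiter := ih ((j+1) % (3*A+3*Bv+1)) _ _ hstep
      have hidx : ((j+1) % (3*A+3*Bv+1) + (n:ℤ)) % (3*A+3*Bv+1)
          = (j + ((n+1 : ℕ):ℤ)) % (3*A+3*Bv+1) := by
        rw [Int.emod_add_emod]
        congr 1
        push_cast
        ring
      rw [hidx] at hiter
      have hcomp : (Tm (A-Bv))^[3*n] ((Tm (A-Bv) (Tm (A-Bv) (Tm (A-Bv) (k, l)))).1,
          (Tm (A-Bv) (Tm (A-Bv) (Tm (A-Bv) (k, l)))).2) = (Tm (A-Bv))^[3*(n+1)] (k, l) := by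
        rw [Prod.mk.eta, show 3*(n+1) = 3*n + 3 by ring, Function.iterate_add_apply]
        rfl
      rw [hcomp] at hiter
      exact hiter

lemma ring_period {A Bv j0 k l : ℤ} (h1 : 0 ≤ Bv) (h2 : A - Bv ≤ 2) (h3 : Bv ≤ A)
    (h0 : OnRing A Bv j0 k l) (n : ℕ) :
    (Tm (A-Bv))^[3*n] (k, l) = (k, l) ↔ (3*A+3*Bv+1) ∣ (n : ℤ) := by
  have hiter := ring_iter h1 h2 h3 n j0 k l h0
  have hj0N : j0 % (3*A+3*Bv+1) = j0 :=
    Int.emod_eq_of_lt h0.1.1 (by have := h0.1.2; omega)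
  constructor
  · intro hfix
    rw [hfix] at hiter
    have heq : (j0 + (n:ℤ)) % (3*A+3*Bv+1) = j0 := ring_inj h1 h2 h3 hiter h0
    have hz : ((j0 + (n:ℤ)) - j0) % (3*A+3*Bv+1) = 0 := by
      refine (Int.emod_eq_emod_iff_emod_sub_eq_zero).mp ?_
      rw [heq, hj0N]
    rw [show j0 + (n:ℤ) - j0 = (n:ℤ) by ring] at hz
    exact Int.dvd_of_emod_eq_zero hz
  · intro hdvd
    obtain ⟨t, ht⟩ := hdvd
    have heq : (j0 + (n:ℤ)) % (3*A+3*Bv+1) = j0 := by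
      rw [ht, Int.add_mul_emod_self_left, hj0N]
    rw [heq] at hiter
    have hKL := ring_fun h1 h2 h3 hiter h0
    exact Prod.ext hKL.1 hKL.2

/-! ### Real dynamics in sheared coordinates -/

noncomputable def Gm (p : ℝ × ℝ) : ℝ × ℝ :=
  (p.2, -p.1 - p.2 + (if 0 ≤ p.2 then (1:ℝ) else -1) / 2)

noncomputable def Rm (e : ℤ) (p : ℝ × ℝ) : ℝ × ℝ := (p.2, (e:ℝ) + 1/2 - p.1 - p.2)

def Emb (p : ℤ × ℤ) (w : ℝ × ℝ) : ℝ × ℝ := ((p.1 : ℝ) + w.1, (p.2 : ℝ) + w.2)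

def GoodW (e : ℤ) (w : ℝ × ℝ) : Prop :=
  0 < w.1 ∧ w.1 < 1 ∧ 0 < w.2 ∧ w.2 < 1 ∧
    (e : ℝ) < w.1 + w.2 + 1/2 ∧ w.1 + w.2 + 1/2 < e + 1

noncomputable def Phi (w : ℝ × ℝ) : ℝ × ℝ := (2*w.1 + w.2, Real.sqrt 3 * w.2)

lemma sqrt3_pos : 0 < Real.sqrt 3 := Real.sqrt_pos.mpr (by norm_num)
lemma sqrt3_sq : Real.sqrt 3 * Real.sqrt 3 = 3 := Real.mul_self_sqrt (by norm_num)

lemma step_real (e : ℤ) (p : ℤ × ℤ) (w : ℝ × ℝ) (hw : GoodW e w) :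
    Gm (Emb p w) = Emb (Tm e p) (Rm e w) ∧ GoodW e (Rm e w) := by
  obtain ⟨h1, h2, h3, h4, h5, h6⟩ := hw
  constructor
  · unfold Gm Emb Tm Rm
    by_cases hl : p.2 < 0
    · have hneg : ¬ (0 ≤ (p.2 : ℝ) + w.2) := by
        push_neg
        have hl' : p.2 ≤ -1 := by omega
        have : (p.2 : ℝ) ≤ -1 := by exact_mod_cast hl'
        linarith
      rw [if_pos hl, if_neg hneg]
      refine Prod.ext ?_ ?_ <;> simp <;> push_cast <;> ring
    · have hpos : (0 ≤ (p.2 : ℝ) + w.2) := by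
        push_neg at hl
        have : (0:ℝ) ≤ (p.2 : ℝ) := by exact_mod_cast hl
        linarith
      rw [if_neg hl, if_pos hpos]
      refine Prod.ext ?_ ?_ <;> simp <;> push_cast <;> ring
  · refine ⟨by simpa [Rm] using h3, by simpa [Rm] using h4, ?_, ?_, ?_, ?_⟩ <;> simp [Rm] <;> linarith

lemma iter_real (e : ℤ) : ∀ (n : ℕ) (p : ℤ × ℤ) (w : ℝ × ℝ), GoodW e w →
    Gm^[n] (Emb p w) = Emb ((Tm e)^[n] p) ((Rm e)^[n] w) ∧ GoodW e ((Rm e)^[n] w) := by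
  intro n
  induction n with
  | zero => intro p w hw; exact ⟨rfl, hw⟩
  | succ n ih =>
      intro p w hw
      obtain ⟨hstep, hgood⟩ := step_real e p w hw
      obtain ⟨hit, hgood'⟩ := ih (Tm e p) (Rm e w) hgood
      constructor
      · rw [Function.iterate_succ_apply, hstep, hit,
          ← Function.iterate_succ_apply (Tm e), ← Function.iterate_succ_apply (Rm e)]
      · rw [← Function.iterate_succ_apply (Rm e)] at hgood'
        exact hgood'

lemma Rm3' (e : ℤ) (w : ℝ × ℝ) : Rm e (Rm e (Rm e w)) = w := by
  unfold Rm
  refine Prod.ext ?_ ?_ <;> simp <;> ring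

lemma Rm3 (e : ℤ) : (Rm e)^[3] = id := by
  funext w
  show Rm e (Rm e (Rm e w)) = w
  exact Rm3' e w

lemma Rm_center (e : ℤ) (w : ℝ × ℝ) (hfix : Rm e w = w) :
    w = ((2*(e:ℝ)+1)/6, (2*(e:ℝ)+1)/6) := by
  have h1 := congrArg Prod.fst hfix
  have h2 := congrArg Prod.snd hfix
  simp [Rm] at h1 h2
  refine Prod.ext ?_ ?_ <;> simp <;> linarith

lemma Rm_dvd (e : ℤ) (n : ℕ) (w : ℝ × ℝ)
    (hne : w ≠ ((2*(e:ℝ)+1)/6, (2*(e:ℝ)+1)/6))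
    (hn : (Rm e)^[n] w = w) : 3 ∣ n := by
  have hsplit : n = 3 * (n / 3) + n % 3 := by omega
  rw [hsplit, Function.iterate_add_apply, Function.iterate_mul, Rm3,
    Function.iterate_id, id_eq] at hn
  have hr : n % 3 = 0 ∨ n % 3 = 1 ∨ n % 3 = 2 := by omega
  rcases hr with hr | hr | hr
  · omega
  · rw [hr] at hn
    simp only [Function.iterate_one] at hn
    exact absurd (Rm_center e w hn) hne
  · rw [hr] at hn
    have hn2 : Rm e (Rm e w) = w := hn
    have hc := congrArg (Rm e) hn2
    rw [Rm3' e w] at hc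
    exact absurd (Rm_center e w hc.symm) hne

lemma emb_eq {p q : ℤ × ℤ} {w z : ℝ × ℝ}
    (hw1 : 0 < w.1) (hw2 : w.1 < 1) (hw3 : 0 < w.2) (hw4 : w.2 < 1)
    (hz1 : 0 < z.1) (hz2 : z.1 < 1) (hz3 : 0 < z.2) (hz4 : z.2 < 1)
    (h : Emb p w = Emb q z) : p = q ∧ w = z := by
  have h1 := congrArg Prod.fst h
  have h2 := congrArg Prod.snd h
  simp [Emb] at h1 h2
  have e1 : ((p.1 - q.1 : ℤ) : ℝ) = z.1 - w.1 := by push_cast; linarith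
  have e2 : ((p.2 - q.2 : ℤ) : ℝ) = z.2 - w.2 := by push_cast; linarith
  have b1 : (-1 : ℝ) < ((p.1 - q.1 : ℤ) : ℝ) := by rw [e1]; linarith
  have b1' : ((p.1 - q.1 : ℤ) : ℝ) < 1 := by rw [e1]; linarith
  have b2 : (-1 : ℝ) < ((p.2 - q.2 : ℤ) : ℝ) := by rw [e2]; linarith
  have b2' : ((p.2 - q.2 : ℤ) : ℝ) < 1 := by rw [e2]; linarith
  have i1 : p.1 = q.1 := by
    have c1 : (-1 : ℤ) < p.1 - q.1 := by exact_mod_cast b1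
    have c2 : p.1 - q.1 < 1 := by exact_mod_cast b1'
    omega
  have i2 : p.2 = q.2 := by
    have c1 : (-1 : ℤ) < p.2 - q.2 := by exact_mod_cast b2
    have c2 : p.2 - q.2 < 1 := by exact_mod_cast b2'
    omega
  have hw1' : w.1 = z.1 := by
    have hzz : ((p.1 - q.1 : ℤ) : ℝ) = 0 := by rw [i1]; push_cast; ring
    rw [hzz] at e1; linarith
  have hw2' : w.2 = z.2 := by
    have hzz : ((p.2 - q.2 : ℤ) : ℝ) = 0 := by rw [i2]; push_cast; ring
    rw [hzz] at e2; linarith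
  exact ⟨Prod.ext i1 i2, Prod.ext hw1' hw2'⟩

lemma phi_semiconj (w : ℝ × ℝ) : F (Phi w) = Phi (Gm w) := by
  unfold F Phi Gm s
  have h0 : (0 ≤ Real.sqrt 3 * w.2) ↔ (0 ≤ w.2) := by
    constructor
    · intro hh; nlinarith [sqrt3_pos]
    · intro hh; positivity
  by_cases hw2 : 0 ≤ w.2
  · rw [if_pos hw2]
    simp only
    rw [if_pos (h0.mpr hw2)]
    refine Prod.ext ?_ ?_ <;> simp
    · linear_combination (w.2 / 2) * sqrt3_sq
    · ring
  · rw [if_neg hw2]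
    simp only
    rw [if_neg (fun hh => hw2 (h0.mp hh))]
    refine Prod.ext ?_ ?_ <;> simp
    · linear_combination (w.2 / 2) * sqrt3_sq
    · ring

lemma phi_inj : Function.Injective Phi := by
  intro w z h
  simp only [Phi, Prod.mk.injEq] at h
  obtain ⟨h1, h2⟩ := h
  have hw2 : w.2 = z.2 := mul_left_cancel₀ (ne_of_gt sqrt3_pos) h2
  exact Prod.ext (by linarith) hw2

lemma phi_iter (n : ℕ) (w : ℝ × ℝ) : F^[n] (Phi w) = Phi (Gm^[n] w) := by
  induction n with
  | zero => rfl
  | succ n ih =>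
      rw [Function.iterate_succ_apply', Function.iterate_succ_apply', ih, phi_semiconj]

/-! ### Main theorem -/

set_option maxHeartbeats 1600000 in
/-- Every zero-free point satisfies `F^{9c+3}(x,y) = (x,y)` with `c = V(x,y)`,
and every zero-free point other than the center of its tile has minimal period
exactly `9c+3`. -/
theorem periods_zero_free_two_pi_div_three (x y : ℝ)
    (h : ¬((∃ k : ℤ, y = Real.sqrt 3 * (x - 2 * k)) ∨
           (∃ ℓ : ℤ, y = Real.sqrt 3 * ℓ) ∨
           (∃ m : ℤ, y = -Real.sqrt 3 * (x - 2 * m - 1)))) :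
    let k : ℤ := B (x, y)
    let ℓ : ℤ := C (x, y)
    let m : ℤ := D (x, y)
    let c : ℕ := (V (x, y)).toNat
    let z : ℝ × ℝ :=
      if m = k + ℓ then
        (2 * (k : ℝ) + ℓ + 1/2, Real.sqrt 3 * ((ℓ : ℝ) + 1/6))
      else if m = k + ℓ + 1 then
        (2 * (k : ℝ) + ℓ + 3/2, Real.sqrt 3 * ((ℓ : ℝ) + 1/2))
      else
        (2 * (k : ℝ) + ℓ + 5/2, Real.sqrt 3 * ((ℓ : ℝ) + 5/6))
    F^[9 * c + 3] (x, y) = (x, y) ∧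
    ((x, y) ≠ z → Function.minimalPeriod F (x, y) = 9 * c + 3) := by
  intro k l m c z
  push_neg at h
  obtain ⟨hg1, hg2, hg3⟩ := h
  set a : ℝ := (3 * x - Real.sqrt 3 * y) / 6 with ha
  set b : ℝ := Real.sqrt 3 * y / 3 with hb
  have hy : y = Real.sqrt 3 * b := by
    rw [hb]; linear_combination (-(y/3)) * sqrt3_sq
  have hx : x = 2*a + b := by rw [ha, hb]; ring
  -- floors
  have hkB : k = ⌊a⌋ := rfl
  have hlC : l = ⌊b⌋ := rfl
  have hmD : m = ⌊a + b + 1/2⌋ := by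
    show D (x, y) = ⌊a + b + 1/2⌋
    unfold D
    congr 1
    rw [ha, hb]; ring
  -- the value of V
  have hVval : V (x, y) = max (max ((k - l + m).natAbs : ℤ) (((k + l + m + 1).natAbs : ℤ) - 1))
      (((-k + l + m).natAbs : ℤ)) := by
    show max (max (|B (x,y) - C (x,y) + D (x,y)|) (|B (x,y) + C (x,y) + D (x,y) + 1| - 1))
      (|(-(B (x,y))) + C (x,y) + D (x,y)|) = _
    rw [Int.abs_eq_natAbs, Int.abs_eq_natAbs, Int.abs_eq_natAbs]
  have hV0 : 0 ≤ V (x, y) := by rw [hVval]; omega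
  have hcV : ((c:ℕ):ℤ) = V (x, y) := Int.toNat_of_nonneg hV0
  clear_value a b k l m c
  -- nonintegrality
  have hna : ∀ t : ℤ, a ≠ (t:ℝ) := by
    intro t ht
    exact hg1 t (by rw [hy, hx, ht]; ring)
  have hnb : ∀ t : ℤ, b ≠ (t:ℝ) := by
    intro t ht
    exact hg2 t (by rw [hy, ht])
  have hnd : ∀ t : ℤ, a + b ≠ (t:ℝ) + 1/2 := by
    intro t ht
    apply hg3 t
    rw [hy, hx]
    linear_combination (2*Real.sqrt 3) * ht
  -- fractional parts
  have hu0 : 0 < a - (k:ℝ) := by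
    have h1 := Int.floor_le a
    rw [← hkB] at h1
    rcases lt_or_eq_of_le h1 with h' | h'
    · linarith
    · exact absurd h'.symm (hna k)
  have hu1 : a - (k:ℝ) < 1 := by
    have h1 := Int.lt_floor_add_one a
    rw [← hkB] at h1
    linarith
  have hv0 : 0 < b - (l:ℝ) := by
    have h1 := Int.floor_le b
    rw [← hlC] at h1
    rcases lt_or_eq_of_le h1 with h' | h'
    · linarith
    · exact absurd h'.symm (hnb l)
  have hv1 : b - (l:ℝ) < 1 := by
    have h1 := Int.lt_floor_add_one b
    rw [← hlC] at h1
    linarith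
  set e : ℤ := m - k - l with he
  clear_value e
  have hm0 : (m:ℝ) < a + b + 1/2 := by
    have h1 := Int.floor_le (a + b + 1/2)
    rw [← hmD] at h1
    rcases lt_or_eq_of_le h1 with h' | h'
    · exact h'
    · exfalso
      apply hnd (m - 1)
      push_cast
      linarith
  have hm1 : a + b + 1/2 < (m:ℝ) + 1 := by
    have h1 := Int.lt_floor_add_one (a + b + 1/2)
    rw [← hmD] at h1
    linarith
  have hGood : GoodW e (a - (k:ℝ), b - (l:ℝ)) := by
    refine ⟨hu0, hu1, hv0, hv1, ?_, ?_⟩ <;> simp only [he] <;> push_cast <;> linarith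
  have he0 : 0 ≤ e := by
    have h6 : a - (k:ℝ) + (b - (l:ℝ)) + 1/2 < (e:ℝ) + 1 := hGood.2.2.2.2.2
    have h7 : (-1 : ℝ) < (e:ℝ) := by linarith
    have h8 : (-1 : ℤ) < e := by exact_mod_cast h7
    omega
  have he2 : e ≤ 2 := by
    have h5 : (e:ℝ) < a - (k:ℝ) + (b - (l:ℝ)) + 1/2 := hGood.2.2.2.2.1
    have h7 : (e:ℝ) < 3 := by linarith
    have h8 : e < (3:ℤ) := by exact_mod_cast h7
    omega
  -- the point as an embedded pair
  have hxyPhi : (x, y) = Phi (Emb (k, l) (a - (k:ℝ), b - (l:ℝ))) := by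
    unfold Phi Emb
    refine Prod.ext ?_ ?_
    · show x = 2*((k:ℝ) + (a - (k:ℝ))) + ((l:ℝ) + (b - (l:ℝ)))
      rw [hx]; ring
    · show y = Real.sqrt 3 * ((l:ℝ) + (b - (l:ℝ)))
      rw [hy]; ring
  -- period characterization
  have key : ∀ n : ℕ, (F^[n] (x, y) = (x, y) ↔
      ((Tm e)^[n] (k, l) = (k, l) ∧
        (Rm e)^[n] (a - (k:ℝ), b - (l:ℝ)) = (a - (k:ℝ), b - (l:ℝ)))) := by
    intro n
    constructor
    · intro hfix
      rw [hxyPhi, phi_iter] at hfix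
      have hG := phi_inj hfix
      obtain ⟨hit, hgood'⟩ := iter_real e n (k, l) _ hGood
      rw [hit] at hG
      exact emb_eq hgood'.1 hgood'.2.1 hgood'.2.2.1 hgood'.2.2.2.1 hu0 hu1 hv0 hv1 hG
    · rintro ⟨hT, hR⟩
      rw [hxyPhi, phi_iter]
      obtain ⟨hit, _⟩ := iter_real e n (k, l) _ hGood
      rw [hit, hT, hR]
  -- integer periodicity facts
  have hTper : (Tm e)^[9*c+3] (k, l) = (k, l) ∧
      ∀ mq : ℕ, 0 < mq → (Tm e)^[3*mq] (k, l) = (k, l) → 3*c+1 ≤ mq := by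
    by_cases hdeg : e = 2 ∧ (c:ℤ) = 0
    · obtain ⟨hde, hdc⟩ := hdeg
      have hkl : k = -1 ∧ l = -1 := by omega
      have hfixT : Tm e (k, l) = (k, l) := by
        rw [hkl.1, hkl.2, hde]
        simp [Tm]
      exact ⟨Function.iterate_fixed hfixT (9*c+3),
        fun mq hmq _ => by omega⟩
    · have h2A : 2 * (((c:ℤ)+e)/2) = (c:ℤ)+e := by omega
      set A : ℤ := ((c:ℤ)+e)/2 with hA
      set Bv : ℤ := (c:ℤ) - A with hBv
      have hABe : A - Bv = e := by omega
      have hABc : A + Bv = (c:ℤ) := by omega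
      have hBv0 : 0 ≤ Bv := by omega
      have h2' : A - Bv ≤ 2 := by omega
      have h3' : Bv ≤ A := by omega
      have hE1 : 2*k + (A - Bv) = k - l + m := by omega
      have hE2 : 2*k + 2*l + (A - Bv) + 1 = k + l + m + 1 := by omega
      have hE3 : 2*l + (A - Bv) = -k + l + m := by omega
      have hcc : max (max ((2*k+(A-Bv)).natAbs : ℤ) (((2*k+2*l+(A-Bv)+1).natAbs : ℤ) - 1))
          ((2*l+(A-Bv)).natAbs : ℤ) = A + Bv := by
        rw [hE1, hE2, hE3, ← hVval, ← hcV, hABc]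
      obtain ⟨j0, hj0⟩ := ring_cover hBv0 h2' h3' hcc
      have hperiod := ring_period hBv0 h2' h3' hj0
      rw [hABe] at hperiod
      constructor
      · rw [show 9*c+3 = 3*(3*c+1) by ring]
        exact (hperiod (3*c+1)).mpr ⟨1, by push_cast; omega⟩
      · intro mq hmq hfix
        have hdvd := (hperiod mq).mp hfix
        have hle : (3*A+3*Bv+1 : ℤ) ≤ (mq:ℤ) :=
          Int.le_of_dvd (by exact_mod_cast hmq) hdvd
        omega
  have hRper : (Rm e)^[9*c+3] (a - (k:ℝ), b - (l:ℝ)) = (a - (k:ℝ), b - (l:ℝ)) := by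
    rw [show 9*c+3 = 3*(3*c+1) by ring, Function.iterate_mul, Rm3,
      Function.iterate_id, id_eq]
  have hper : F^[9*c+3] (x, y) = (x, y) := (key (9*c+3)).mpr ⟨hTper.1, hRper⟩
  refine ⟨hper, ?_⟩
  intro hnez
  -- the point is not the center
  have hncenter : (a - (k:ℝ), b - (l:ℝ)) ≠ ((2*(e:ℝ)+1)/6, (2*(e:ℝ)+1)/6) := by
    intro hcen
    apply hnez
    rw [hxyPhi, hcen]
    have he' : e = 0 ∨ e = 1 ∨ e = 2 := by omega
    show Phi (Emb (k, l) ((2*(e:ℝ)+1)/6, (2*(e:ℝ)+1)/6)) = z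
    show Phi (Emb (k, l) ((2*(e:ℝ)+1)/6, (2*(e:ℝ)+1)/6)) =
      if m = k + l then (2 * (k : ℝ) + l + 1/2, Real.sqrt 3 * ((l : ℝ) + 1/6))
      else if m = k + l + 1 then (2 * (k : ℝ) + l + 3/2, Real.sqrt 3 * ((l : ℝ) + 1/2))
      else (2 * (k : ℝ) + l + 5/2, Real.sqrt 3 * ((l : ℝ) + 5/6))
    rcases he' with h0 | h0 | h0
    · rw [if_pos (show m = k + l by omega)]
      unfold Phi Emb
      refine Prod.ext ?_ ?_
      · show 2*((k:ℝ) + (2*(e:ℝ)+1)/6) + ((l:ℝ) + (2*(e:ℝ)+1)/6) = 2*(k:ℝ) + (l:ℝ) + 1/2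
        rw [h0]; push_cast; ring
      · show Real.sqrt 3 * ((l:ℝ) + (2*(e:ℝ)+1)/6) = Real.sqrt 3 * ((l:ℝ) + 1/6)
        rw [h0]; push_cast; ring
    · rw [if_neg (show ¬ m = k + l by omega), if_pos (show m = k + l + 1 by omega)]
      unfold Phi Emb
      refine Prod.ext ?_ ?_
      · show 2*((k:ℝ) + (2*(e:ℝ)+1)/6) + ((l:ℝ) + (2*(e:ℝ)+1)/6) = 2*(k:ℝ) + (l:ℝ) + 3/2
        rw [h0]; push_cast; ring
      · show Real.sqrt 3 * ((l:ℝ) + (2*(e:ℝ)+1)/6) = Real.sqrt 3 * ((l:ℝ) + 1/2)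
        rw [h0]; push_cast; ring
    · rw [if_neg (show ¬ m = k + l by omega), if_neg (show ¬ m = k + l + 1 by omega)]
      unfold Phi Emb
      refine Prod.ext ?_ ?_
      · show 2*((k:ℝ) + (2*(e:ℝ)+1)/6) + ((l:ℝ) + (2*(e:ℝ)+1)/6) = 2*(k:ℝ) + (l:ℝ) + 5/2
        rw [h0]; push_cast; ring
      · show Real.sqrt 3 * ((l:ℝ) + (2*(e:ℝ)+1)/6) = Real.sqrt 3 * ((l:ℝ) + 5/6)
        rw [h0]; push_cast; ring
  -- minimal period
  have hperiodic : Function.IsPeriodicPt F (9*c+3) (x, y) := hper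
  have hmem : (x, y) ∈ Function.periodicPts F := ⟨9*c+3, by omega, hperiodic⟩
  have hpos := Function.minimalPeriod_pos_of_mem_periodicPts hmem
  have hfixmp : F^[Function.minimalPeriod F (x, y)] (x, y) = (x, y) :=
    Function.iterate_minimalPeriod
  obtain ⟨hT, hR⟩ := (key _).mp hfixmp
  have h3dvd : 3 ∣ Function.minimalPeriod F (x, y) := Rm_dvd e _ _ hncenter hR
  obtain ⟨mq, hmq⟩ := h3dvd
  have hge : 3*c+1 ≤ mq := hTper.2 mq (by omega) (by rw [← hmq]; exact hT)
  have hle : Function.minimalPeriod F (x, y) ≤ 9*c+3 :=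
    Function.IsPeriodicPt.minimalPeriod_le (by omega) hperiodic
  omega
end

section
/- Let F(x,y) = (−(x − s(y))/2 + (√3/2)y, −(√3/2)(x − s(y)) − y/2). For all k,ℓ ∈ ℤ, consider the hexagon center p_{k,ℓ} = (2k+ℓ+3/2, √3(ℓ+1/2)) and set c = max(|2k+1|, 2|k+ℓ+1| − 1, |2ℓ+1|). Then F(p_{k,ℓ}) = p_{k',ℓ'} for some k',ℓ' ∈ ℤ with max(|2k'+1|, 2|k'+ℓ'+1| − 1, |2ℓ'+1|) = c (F permutes the set of hexagon centers of each level), and the minimal period of p_{k,ℓ} under F equals 3c+1. -/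
/-- The hexagon center `p_{k,ℓ}` of the trihexagonal tiling. -/
noncomputable def pc (k ℓ : ℤ) : ℝ × ℝ :=
  (2 * (k : ℝ) + ℓ + 3/2, Real.sqrt 3 * ((ℓ : ℝ) + 1/2))

/-- The level of `p_{k,ℓ}`. -/
def lvl (k ℓ : ℤ) : ℤ := max (max (|2 * k + 1|) (2 * |k + ℓ + 1| - 1)) (|2 * ℓ + 1|)

/-!
`F` sends `p_{k,ℓ}` to `p_{ℓ,ℓ'}` with `ℓ' = -k-ℓ-1` or `-k-ℓ-2` according to the sign of `ℓ`,
and this index map preserves the level. Levels are odd, and the centers of level `c = 2m+1` are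
exactly the `p_{u n, u (n+1)}`, `0 ≤ n < 6m+4`, for an explicit sequence `u = levelSeq m` that
runs once around the hexagonal ring of that level, satisfies the index recursion and closes up
after `6m+4` steps. An injective closed cycle of length `6m+4 = 3c+1` has minimal period `3c+1`.
-/

theorem Function.minimalPeriod_eq_of_cycle {α : Type*} {f : α → α} {φ : ℕ → α} {N : ℕ}
    (hN : 0 < N) (hstep : ∀ n < N, f (φ n) = φ (n + 1)) (hclose : φ N = φ 0)
    (hinj : Set.InjOn φ (Set.Iio N)) {j : ℕ} (hj : j < N) :
    Function.minimalPeriod f (φ j) = N := by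
  have horbit : ∀ n ≤ N, f^[n] (φ 0) = φ n := by
    intro n hn
    induction n with
    | zero => rfl
    | succ n ih => rw [Function.iterate_succ_apply', ih (by omega), hstep n (by omega)]
  have hper : Function.IsPeriodicPt f N (φ 0) := by
    rw [Function.IsPeriodicPt, Function.IsFixedPt, horbit N le_rfl, hclose]
  have hpos := hper.minimalPeriod_pos hN
  have hbase : Function.minimalPeriod f (φ 0) = N := by
    refine (hper.minimalPeriod_le hN).antisymm (not_lt.1 fun hlt ↦ hpos.ne' ?_)
    refine hinj (Set.mem_Iio.2 hlt) (Set.mem_Iio.2 hN) ?_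
    rw [← horbit _ hlt.le, Function.iterate_minimalPeriod]
  rw [← horbit j hj.le, Function.minimalPeriod_apply_iterate (Function.mk_mem_periodicPts hN hper),
    hbase]

lemma pc_injective : Function.Injective (Function.uncurry pc) := by
  rintro ⟨k, ℓ⟩ ⟨k', ℓ'⟩ h
  simp only [Function.uncurry_apply_pair, pc, Prod.mk.injEq] at h
  have hℓ : (ℓ : ℝ) = ℓ' := by
    have := mul_left_cancel₀ (by positivity : √3 ≠ 0) h.2
    linarith
  have hk : (k : ℝ) = k' := by linarith [h.1]
  exact Prod.ext (by exact_mod_cast hk) (by exact_mod_cast hℓ)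

def hexNext (k ℓ : ℤ) : ℤ := if 0 ≤ ℓ then -k - ℓ - 1 else -k - ℓ - 2

lemma s_pc_snd (k ℓ : ℤ) : s (pc k ℓ).2 = 2 * ((hexNext k ℓ : ℝ) + k + ℓ) + 3 := by
  unfold s pc hexNext
  by_cases hℓ : 0 ≤ ℓ
  · have : (0 : ℝ) ≤ ℓ := by exact_mod_cast hℓ
    rw [if_pos (by positivity), if_pos hℓ]
    push_cast; ring
  · have : (ℓ : ℝ) + 1 / 2 < 0 := by
      have : (ℓ : ℝ) ≤ -1 := by exact_mod_cast (by omega : ℓ ≤ -1)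
      linarith
    rw [if_neg (not_le.2 (mul_neg_of_pos_of_neg (by positivity) this)), if_neg hℓ]
    push_cast; ring

lemma F_pc (k ℓ : ℤ) : F (pc k ℓ) = pc ℓ (hexNext k ℓ) := by
  have hs := s_pc_snd k ℓ
  have h3 : √3 * √3 = 3 := Real.mul_self_sqrt (by norm_num)
  unfold F pc at *
  ext
  · linear_combination (1 / 2 : ℝ) * hs + ((ℓ : ℝ) / 2 + 1 / 4) * h3
  · linear_combination (√3 / 2) * hs

lemma lvl_hexNext (k ℓ : ℤ) : lvl ℓ (hexNext k ℓ) = lvl k ℓ := by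
  unfold lvl hexNext
  split_ifs <;> simp only [abs_eq_max_neg] <;> omega

lemma lvl_odd (k ℓ : ℤ) : ∃ m : ℕ, lvl k ℓ = 2 * m + 1 := by
  refine ⟨((lvl k ℓ - 1) / 2).toNat, ?_⟩
  unfold lvl
  simp only [abs_eq_max_neg]
  omega

def levelSeq (m n : ℕ) : ℤ :=
  if n % 3 = 0 then (n / 3 : ℕ) - m - 1
  else if n % 3 = 1 then -min ((n / 3 : ℕ) : ℤ) m - 1
  else 2 * m - max ((n / 3 : ℕ) : ℤ) m

lemma levelSeq_three_mul (m i : ℕ) : levelSeq m (3 * i) = i - m - 1 := by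
  unfold levelSeq
  split_ifs <;> omega

lemma levelSeq_three_mul_add_one (m i : ℕ) : levelSeq m (3 * i + 1) = -min (i : ℤ) m - 1 := by
  unfold levelSeq
  split_ifs <;> omega

lemma levelSeq_three_mul_add_two (m i : ℕ) : levelSeq m (3 * i + 2) = 2 * m - max (i : ℤ) m := by
  unfold levelSeq
  split_ifs <;> omega

lemma levelSeq_six_mul_add_four (m : ℕ) : levelSeq m (6 * m + 4) = levelSeq m 0 := by
  rw [show 6 * m + 4 = 3 * (2 * m + 1) + 1 by ring, levelSeq_three_mul_add_one,
    show levelSeq m 0 = levelSeq m (3 * 0) from rfl, levelSeq_three_mul]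
  omega

lemma levelSeq_six_mul_add_five (m : ℕ) : levelSeq m (6 * m + 5) = levelSeq m 1 := by
  rw [show 6 * m + 5 = 3 * (2 * m + 1) + 2 by ring, levelSeq_three_mul_add_two,
    show levelSeq m 1 = levelSeq m (3 * 0 + 1) from rfl, levelSeq_three_mul_add_one]
  omega

lemma exists_levelSeq_eq {m : ℕ} {k ℓ : ℤ} (h : lvl k ℓ = 2 * m + 1) :
    ∃ n < 6 * m + 4, levelSeq m n = k ∧ levelSeq m (n + 1) = ℓ := by
  unfold lvl at h
  simp only [abs_eq_max_neg] at h
  -- the arcs `n % 3 = 0`, `n % 3 = 1` (split at `n / 3 = m`) and `n % 3 = 2` of the ring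
  rcases (by omega : (-m - 1 ≤ k ∧ k ≤ m ∧ ℓ = max (-k - m - 2) (-m - 1)) ∨
      (-m - 1 ≤ k ∧ k ≤ -1 ∧ ℓ = m) ∨ (k = -m - 1 ∧ 0 ≤ ℓ ∧ ℓ ≤ m) ∨
      (-m ≤ ℓ ∧ ℓ ≤ m ∧ k = min (m : ℤ) (m - ℓ))) with hc | hc | hc | hc
  · refine ⟨3 * (k + m + 1).toNat, by omega, ?_, ?_⟩
    · rw [levelSeq_three_mul]; omega
    · rw [levelSeq_three_mul_add_one]; omega
  · refine ⟨3 * (-k - 1).toNat + 1, by omega, ?_, ?_⟩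
    · rw [levelSeq_three_mul_add_one]; omega
    · rw [levelSeq_three_mul_add_two]; omega
  · refine ⟨3 * (2 * (m : ℤ) - ℓ).toNat + 1, by omega, ?_, ?_⟩
    · rw [levelSeq_three_mul_add_one]; omega
    · rw [levelSeq_three_mul_add_two]; omega
  · refine ⟨3 * (ℓ + m).toNat + 2, by omega, ?_, ?_⟩
    · rw [levelSeq_three_mul_add_two]; omega
    · rw [show 3 * (ℓ + m).toNat + 2 + 1 = 3 * ((ℓ + m).toNat + 1) by ring, levelSeq_three_mul]
      omega

lemma levelSeq_add_two {m n : ℕ} (hn : n < 6 * m + 4) :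
    levelSeq m (n + 2) = hexNext (levelSeq m n) (levelSeq m (n + 1)) := by
  unfold levelSeq hexNext
  split_ifs <;> omega

lemma levelSeq_pair_injOn (m : ℕ) :
    Set.InjOn (fun n ↦ (levelSeq m n, levelSeq m (n + 1))) (Set.Iio (6 * m + 4)) := by
  intro i hi j hj h
  simp only [Set.mem_Iio, Prod.mk.injEq] at hi hj h
  unfold levelSeq at h
  split_ifs at h <;> omega

/-- `F` permutes the hexagon centers of each level, and each hexagon center
with level `c` has minimal period `3c+1` under `F`. -/
theorem hexagon_centers_dynamics_two_pi_div_three (k ℓ : ℤ) :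
    (∃ k' ℓ' : ℤ, F (pc k ℓ) = pc k' ℓ' ∧ lvl k' ℓ' = lvl k ℓ) ∧
    (Function.minimalPeriod F (pc k ℓ) : ℤ) = 3 * lvl k ℓ + 1 := by
  refine ⟨⟨ℓ, hexNext k ℓ, F_pc k ℓ, lvl_hexNext k ℓ⟩, ?_⟩
  obtain ⟨m, hm⟩ := lvl_odd k ℓ
  obtain ⟨n, hn, rfl, rfl⟩ := exists_levelSeq_eq hm
  have hcycle : Function.minimalPeriod F (pc (levelSeq m n) (levelSeq m (n + 1))) = 6 * m + 4 :=
    Function.minimalPeriod_eq_of_cycle (φ := fun n ↦ pc (levelSeq m n) (levelSeq m (n + 1)))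
      (by omega) (fun n hn ↦ by rw [F_pc, levelSeq_add_two hn])
      (by rw [levelSeq_six_mul_add_four, levelSeq_six_mul_add_five])
      (pc_injective.comp_injOn (levelSeq_pair_injOn m)) hn
  rw [hcycle, hm]
  push_cast
  ring
end

section
/- Let F(x,y) = (−(x − s(y))/2 + (√3/2)y, −(√3/2)(x − s(y)) − y/2). The map F is pointwise periodic: every q ∈ ℝ² satisfies F^p(q) = q for some p ≥ 1. Every point of the grid 𝔉 has minimal period of the form 9n+3 for some n ∈ ℕ₀, and the set of minimal periods of points of F equals {3n+1 : n ∈ ℕ₀} ∪ {9n+3 : n ∈ ℕ₀}. -/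
/-- The grid `𝔉` (trihexagonal tiling lines) of the `α = 2π/3` map. -/
def grid : Set (ℝ × ℝ) :=
  {q | (∃ k : ℤ, q.2 = Real.sqrt 3 * (q.1 - 2 * k)) ∨
       (∃ ℓ : ℤ, q.2 = Real.sqrt 3 * ℓ) ∨
       (∃ m : ℤ, q.2 = -Real.sqrt 3 * (q.1 - 2 * m - 1))}

namespace PwP

def Gm : ℤ × ℤ × ℤ → ℤ × ℤ × ℤ := fun w =>
  if 0 ≤ w.2.2 then (w.2.2, w.1, w.2.1) else (w.2.2, w.1 + 1, w.2.1 - 1)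

lemma Gm_pos (i j k : ℤ) (h : 0 ≤ k) : Gm (i, j, k) = (k, i, j) := by
  simp [Gm, h]

lemma Gm_neg (i j k : ℤ) (h : ¬ 0 ≤ k) : Gm (i, j, k) = (k, i + 1, j - 1) := by
  simp [Gm, h]

lemma triple_ext (a b c a' b' c' : ℤ) (h1 : a = a') (h2 : b = b') (h3 : c = c') :
    ((a, b, c) : ℤ × ℤ × ℤ) = (a', b', c') := by subst h1; subst h2; subst h3; rfl

def cyc (e r t : ℤ) : ℤ × ℤ × ℤ :=
  if t ≤ r then (t, r - t, -r - e)
  else if t ≤ 2*r + e then (r, r - t, t - 2*r - e)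
  else if t ≤ 3*r + e then (3*r + e - t, -r - e, t - 2*r - e)
  else if t ≤ 4*r + 2*e then (3*r + e - t, t - 4*r - 2*e, r)
  else if t ≤ 5*r + 2*e + 1 then (-r - e, t - 4*r - 2*e, 5*r + 2*e - t)
  else (t - (6*r + 3*e + 1), r + 1, 5*r + 2*e - t)

lemma cyc_eval1 (e r t : ℤ) (h : t ≤ r) : cyc e r t = (t, r - t, -r - e) := by
  rw [cyc, if_pos h]

lemma cyc_eval2 (e r t : ℤ) (h1 : ¬ t ≤ r) (h2 : t ≤ 2*r + e) :
    cyc e r t = (r, r - t, t - 2*r - e) := by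
  rw [cyc, if_neg h1, if_pos h2]

lemma cyc_eval3 (e r t : ℤ) (h1 : ¬ t ≤ r) (h2 : ¬ t ≤ 2*r + e) (h3 : t ≤ 3*r + e) :
    cyc e r t = (3*r + e - t, -r - e, t - 2*r - e) := by
  rw [cyc, if_neg h1, if_neg h2, if_pos h3]

lemma cyc_eval4 (e r t : ℤ) (h1 : ¬ t ≤ r) (h2 : ¬ t ≤ 2*r + e) (h3 : ¬ t ≤ 3*r + e)
    (h4 : t ≤ 4*r + 2*e) : cyc e r t = (3*r + e - t, t - 4*r - 2*e, r) := by
  rw [cyc, if_neg h1, if_neg h2, if_neg h3, if_pos h4]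

lemma cyc_eval5 (e r t : ℤ) (h1 : ¬ t ≤ r) (h2 : ¬ t ≤ 2*r + e) (h3 : ¬ t ≤ 3*r + e)
    (h4 : ¬ t ≤ 4*r + 2*e) (h5 : t ≤ 5*r + 2*e + 1) :
    cyc e r t = (-r - e, t - 4*r - 2*e, 5*r + 2*e - t) := by
  rw [cyc, if_neg h1, if_neg h2, if_neg h3, if_neg h4, if_pos h5]

lemma cyc_eval6 (e r t : ℤ) (h1 : ¬ t ≤ r) (h2 : ¬ t ≤ 2*r + e) (h3 : ¬ t ≤ 3*r + e)
    (h4 : ¬ t ≤ 4*r + 2*e) (h5 : ¬ t ≤ 5*r + 2*e + 1) :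
    cyc e r t = (t - (6*r + 3*e + 1), r + 1, 5*r + 2*e - t) := by
  rw [cyc, if_neg h1, if_neg h2, if_neg h3, if_neg h4, if_neg h5]

lemma cyc_step (e r t : ℤ) (he : e = 0 ∨ e = 1) (hr : 0 ≤ r) (h0 : 0 ≤ t)
    (h1 : t ≤ 6*r + 3*e) :
    Gm (cyc e r t) =
      cyc e r (if t + (4*r + 2*e + 1) ≤ 6*r + 3*e then t + (4*r + 2*e + 1) else t - (2*r + e)) := by
  have he0 : 0 ≤ e ∧ e ≤ 1 := by rcases he with h | h <;> omega
  rcases le_or_gt t r with c1 | c1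
  · -- phase 1
    rw [cyc_eval1 e r t c1]
    rcases eq_or_lt_of_le (by omega : (0:ℤ) ≤ r + e) with hre | hre
    · have hr0 : r = 0 := by omega
      have he' : e = 0 := by omega
      have ht0 : t = 0 := by omega
      subst hr0; subst he'; subst ht0
      rw [Gm_pos 0 (0 - 0) (-0 - 0) (by omega), if_neg (by omega),
        cyc_eval1 0 0 (0 - (2*0 + 0)) (by omega)]
      exact triple_ext _ _ _ _ _ _ (by omega) (by omega) (by omega)
    · rw [Gm_neg t (r - t) (-r - e) (by omega), if_pos (by omega),
        cyc_eval5 e r (t + (4*r + 2*e + 1)) (by omega) (by omega) (by omega) (by omega) (by omega)]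
      exact triple_ext _ _ _ _ _ _ (by omega) (by omega) (by omega)
  · rcases lt_or_ge t (2*r + e) with c2 | c2
    · rw [cyc_eval2 e r t (by omega) (by omega), Gm_neg r (r - t) (t - 2*r - e) (by omega),
        if_pos (by omega),
        cyc_eval6 e r (t + (4*r + 2*e + 1)) (by omega) (by omega) (by omega) (by omega) (by omega)]
      exact triple_ext _ _ _ _ _ _ (by omega) (by omega) (by omega)
    · rcases eq_or_lt_of_le c2 with c2' | c2'
      · rw [cyc_eval2 e r t (by omega) (by omega), Gm_pos r (r - t) (t - 2*r - e) (by omega),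
          if_neg (by omega), cyc_eval1 e r (t - (2*r + e)) (by omega)]
        exact triple_ext _ _ _ _ _ _ (by omega) (by omega) (by omega)
      · rcases le_or_gt t (3*r + e) with c3 | c3
        · rw [cyc_eval3 e r t (by omega) (by omega) (by omega),
            Gm_pos (3*r + e - t) (-r - e) (t - 2*r - e) (by omega),
            if_neg (by omega), cyc_eval1 e r (t - (2*r + e)) (by omega)]
          exact triple_ext _ _ _ _ _ _ (by omega) (by omega) (by omega)
        · rcases le_or_gt t (4*r + 2*e) with c4 | c4
          · rw [cyc_eval4 e r t (by omega) (by omega) (by omega) (by omega),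
              Gm_pos (3*r + e - t) (t - 4*r - 2*e) r (by omega),
              if_neg (by omega), cyc_eval2 e r (t - (2*r + e)) (by omega) (by omega)]
            exact triple_ext _ _ _ _ _ _ (by omega) (by omega) (by omega)
          · rcases le_or_gt t (5*r + 2*e) with c5 | c5
            · rw [cyc_eval5 e r t (by omega) (by omega) (by omega) (by omega) (by omega),
                Gm_pos (-r - e) (t - 4*r - 2*e) (5*r + 2*e - t) (by omega),
                if_neg (by omega), cyc_eval3 e r (t - (2*r + e)) (by omega) (by omega) (by omega)]
              exact triple_ext _ _ _ _ _ _ (by omega) (by omega) (by omega)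
            · rcases eq_or_lt_of_le (by omega : 5*r + 2*e + 1 ≤ t) with c5' | c5'
              · rw [cyc_eval5 e r t (by omega) (by omega) (by omega) (by omega) (by omega),
                  Gm_neg (-r - e) (t - 4*r - 2*e) (5*r + 2*e - t) (by omega),
                  if_neg (by omega),
                  cyc_eval4 e r (t - (2*r + e)) (by omega) (by omega) (by omega) (by omega)]
                exact triple_ext _ _ _ _ _ _ (by omega) (by omega) (by omega)
              · rw [cyc_eval6 e r t (by omega) (by omega) (by omega) (by omega) (by omega),
                  Gm_neg (t - (6*r + 3*e + 1)) (r + 1) (5*r + 2*e - t) (by omega),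
                  if_neg (by omega),
                  cyc_eval4 e r (t - (2*r + e)) (by omega) (by omega) (by omega) (by omega)]
                exact triple_ext _ _ _ _ _ _ (by omega) (by omega) (by omega)

lemma cyc_inj (e r t t' : ℤ) (he : e = 0 ∨ e = 1) (hr : 0 ≤ r)
    (h0 : 0 ≤ t) (h1 : t ≤ 6*r + 3*e) (h0' : 0 ≤ t') (h1' : t' ≤ 6*r + 3*e)
    (h : cyc e r t = cyc e r t') : t = t' := by
  simp only [cyc] at h
  split_ifs at h <;> (simp only [Prod.mk.injEq, true_and, and_true] at h <;> omega)

lemma cyc_cover (e : ℤ) (he : e = 0 ∨ e = 1) (w : ℤ × ℤ × ℤ)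
    (hw : w.1 + w.2.1 + w.2.2 = -e) :
    ∃ r t : ℤ, 0 ≤ r ∧ 0 ≤ t ∧ t ≤ 6*r + 3*e ∧ cyc e r t = w := by
  obtain ⟨i, j, k⟩ := w
  simp only at hw
  rcases he with he | he <;> subst he
  · rcases le_or_gt 0 i with hi | hi
    · rcases le_or_gt 0 j with hj | hj
      · exact ⟨i+j, i, by omega, by omega, by omega,
          by simp only [cyc]; split_ifs <;> exact triple_ext _ _ _ _ _ _ (by omega) (by omega) (by omega)⟩
      · rcases le_or_gt 0 k with hk | hk
        · exact ⟨-j, -3*j - i, by omega, by omega, by omega,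
            by simp only [cyc]; split_ifs <;> exact triple_ext _ _ _ _ _ _ (by omega) (by omega) (by omega)⟩
        · exact ⟨i, i - j, by omega, by omega, by omega,
            by simp only [cyc]; split_ifs <;> exact triple_ext _ _ _ _ _ _ (by omega) (by omega) (by omega)⟩
    · rcases le_or_gt 0 j with hj | hj
      · rcases le_or_gt (-1) k with hk | hk
        · exact ⟨-i, j - 4*i, by omega, by omega, by omega,
            by simp only [cyc]; split_ifs <;> exact triple_ext _ _ _ _ _ _ (by omega) (by omega) (by omega)⟩
        · exact ⟨j-1, i + 6*j - 5, by omega, by omega, by omega,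
            by simp only [cyc]; split_ifs <;> exact triple_ext _ _ _ _ _ _ (by omega) (by omega) (by omega)⟩
      · exact ⟨k, 3*k - i, by omega, by omega, by omega,
          by simp only [cyc]; split_ifs <;> exact triple_ext _ _ _ _ _ _ (by omega) (by omega) (by omega)⟩
  · rcases le_or_gt 0 i with hi | hi
    · rcases le_or_gt 0 j with hj | hj
      · exact ⟨i+j, i, by omega, by omega, by omega,
          by simp only [cyc]; split_ifs <;> exact triple_ext _ _ _ _ _ _ (by omega) (by omega) (by omega)⟩
      · rcases le_or_gt 0 k with hk | hk
        · exact ⟨-j-1, -3*j - 2 - i, by omega, by omega, by omega,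
            by simp only [cyc]; split_ifs <;> exact triple_ext _ _ _ _ _ _ (by omega) (by omega) (by omega)⟩
        · exact ⟨i, i - j, by omega, by omega, by omega,
            by simp only [cyc]; split_ifs <;> exact triple_ext _ _ _ _ _ _ (by omega) (by omega) (by omega)⟩
    · rcases le_or_gt 0 j with hj | hj
      · rcases le_or_gt (-1) k with hk | hk
        · exact ⟨-i-1, j - 4*i - 2, by omega, by omega, by omega,
            by simp only [cyc]; split_ifs <;> exact triple_ext _ _ _ _ _ _ (by omega) (by omega) (by omega)⟩
        · exact ⟨j-1, i + 6*j - 2, by omega, by omega, by omega,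
            by simp only [cyc]; split_ifs <;> exact triple_ext _ _ _ _ _ _ (by omega) (by omega) (by omega)⟩
      · exact ⟨k, 3*k + 1 - i, by omega, by omega, by omega,
          by simp only [cyc]; split_ifs <;> exact triple_ext _ _ _ _ _ _ (by omega) (by omega) (by omega)⟩


lemma int_eq_of_close (L a b : ℤ) (hL : 0 < L) (h : L ∣ a - b) (ha : 0 ≤ a) (ha2 : a ≤ L - 1)
    (hb : 0 ≤ b) (hb2 : b ≤ L - 1) : a = b := by
  obtain ⟨c, hc⟩ := h
  rcases lt_trichotomy c 0 with h' | h' | h'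
  · exfalso; nlinarith
  · rw [h', mul_zero] at hc; omega
  · exfalso; nlinarith

/-- The orbit of `cyc e r t0` under `Gm`: position after `n` steps. -/
lemma cyc_orbit (e r t0 : ℤ) (he : e = 0 ∨ e = 1) (hr : 0 ≤ r) (h0 : 0 ≤ t0)
    (h1 : t0 ≤ 6*r + 3*e) (n : ℕ) :
    ∃ t : ℤ, 0 ≤ t ∧ t ≤ 6*r + 3*e ∧
      t ≡ t0 + n * (4*r + 2*e + 1) [ZMOD 6*r + 3*e + 1] ∧
      Gm^[n] (cyc e r t0) = cyc e r t := by
  induction n with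
  | zero => exact ⟨t0, h0, h1, by simp, rfl⟩
  | succ n ih =>
    obtain ⟨t, ht0, ht1, hmod, hit⟩ := ih
    refine ⟨if t + (4*r + 2*e + 1) ≤ 6*r + 3*e then t + (4*r + 2*e + 1) else t - (2*r + e),
      ?_, ?_, ?_, ?_⟩
    · split_ifs <;> omega
    · split_ifs <;> omega
    · have harith : t0 + (n+1 : ℕ) * (4*r + 2*e + 1)
          = (t0 + n * (4*r + 2*e + 1)) + (4*r + 2*e + 1) := by push_cast; ring
      rw [harith]
      split_ifs with hc
      · exact Int.ModEq.add_right _ hmod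
      · have : t - (2*r + e) = (t + (4*r + 2*e + 1)) - (6*r + 3*e + 1) := by ring
        rw [this]
        calc (t + (4*r + 2*e + 1)) - (6*r + 3*e + 1)
            ≡ (t + (4*r + 2*e + 1)) - 0 [ZMOD 6*r + 3*e + 1] :=
              (Int.ModEq.refl _).sub (Int.modEq_zero_iff_dvd.mpr dvd_rfl)
          _ ≡ t0 + n * (4*r + 2*e + 1) + (4*r + 2*e + 1) [ZMOD 6*r + 3*e + 1] := by
              rw [sub_zero]; exact Int.ModEq.add_right _ hmod
    · rw [Function.iterate_succ_apply', hit]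
      exact cyc_step e r t he hr ht0 ht1

lemma cyc_period_iff (e r t0 : ℤ) (he : e = 0 ∨ e = 1) (hr : 0 ≤ r) (h0 : 0 ≤ t0)
    (h1 : t0 ≤ 6*r + 3*e) (n : ℕ) :
    Gm^[n] (cyc e r t0) = cyc e r t0 ↔ (6*r + 3*e + 1 : ℤ) ∣ (n : ℤ) := by
  obtain ⟨t, ht0, ht1, hmod, hit⟩ := cyc_orbit e r t0 he hr h0 h1 n
  constructor
  · intro h
    rw [hit] at h
    have ht : t = t0 := cyc_inj e r t t0 he hr ht0 ht1 h0 h1 h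
    subst ht
    have hd : (6*r + 3*e + 1 : ℤ) ∣ (t + n * (4*r + 2*e + 1)) - t := Int.ModEq.dvd hmod
    have hd2 : (6*r + 3*e + 1 : ℤ) ∣ (n : ℤ) * (4*r + 2*e + 1) := by
      have : (t + n * (4*r + 2*e + 1)) - t = (n : ℤ) * (4*r + 2*e + 1) := by ring
      rwa [this] at hd
    have key : (n : ℤ) = 3*((n:ℤ)*(4*r + 2*e + 1)) - (2*(n:ℤ))*(6*r + 3*e + 1) := by ring
    rw [key]
    exact dvd_sub (Dvd.dvd.mul_left hd2 3) ⟨2*(n:ℤ), by ring⟩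
  · intro h
    have hd : (6*r + 3*e + 1 : ℤ) ∣ (t0 + (n:ℤ) * (4*r + 2*e + 1)) - t0 := by
      have : (t0 + (n:ℤ) * (4*r + 2*e + 1)) - t0 = (n : ℤ) * (4*r + 2*e + 1) := by ring
      rw [this]
      exact Dvd.dvd.mul_right h _
    have hd2 : (6*r + 3*e + 1 : ℤ) ∣ t - t0 := by
      have h3 := (Int.ModEq.dvd hmod)
      have : t - t0 = ((t0 + (n:ℤ) * (4*r + 2*e + 1)) - t0) - ((t0 + (n:ℤ) * (4*r + 2*e + 1)) - t) := by
        ring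
      rw [this]
      exact dvd_sub hd h3
    have : t = t0 := int_eq_of_close (6*r + 3*e + 1) t t0 (by omega) hd2 ht0 (by omega) h0 (by omega)
    rw [hit, this]

/-! ### The conjugation `tau` handling the level `-2` -/

def tau (w : ℤ × ℤ × ℤ) : ℤ × ℤ × ℤ := (-w.2.2 - 1, -w.2.1, -w.1 - 1)

def Gi : ℤ × ℤ × ℤ → ℤ × ℤ × ℤ := fun w =>
  if 0 ≤ w.1 then (w.2.1, w.2.2, w.1) else (w.2.1 - 1, w.2.2 + 1, w.1)

lemma Gi_pos (i j k : ℤ) (h : 0 ≤ i) : Gi (i, j, k) = (j, k, i) := by simp [Gi, h]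

lemma Gi_neg (i j k : ℤ) (h : ¬ 0 ≤ i) : Gi (i, j, k) = (j - 1, k + 1, i) := by simp [Gi, h]

lemma Gm_Gi (w : ℤ × ℤ × ℤ) : Gm (Gi w) = w := by
  obtain ⟨i, j, k⟩ := w
  by_cases h : 0 ≤ i
  · rw [Gi_pos i j k h, Gm_pos j k i h]
  · rw [Gi_neg i j k h, Gm_neg (j-1) (k+1) i h]
    exact triple_ext _ _ _ _ _ _ rfl (by ring) (by ring)

lemma Gi_Gm (w : ℤ × ℤ × ℤ) : Gi (Gm w) = w := by
  obtain ⟨i, j, k⟩ := w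
  by_cases h : 0 ≤ k
  · rw [Gm_pos i j k h, Gi_pos k i j h]
  · rw [Gm_neg i j k h, Gi_neg k (i+1) (j-1) h]
    exact triple_ext _ _ _ _ _ _ (by ring) (by ring) rfl

lemma tau_Gm (w : ℤ × ℤ × ℤ) : Gm (tau w) = tau (Gi w) := by
  obtain ⟨i, j, k⟩ := w
  by_cases h : 0 ≤ i
  · rw [Gi_pos i j k h]
    show Gm (-k - 1, -j, -i - 1) = (-i - 1, -k, -j - 1)
    rw [Gm_neg (-k-1) (-j) (-i-1) (by omega)]
    exact triple_ext _ _ _ _ _ _ rfl (by ring) (by ring)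
  · rw [Gi_neg i j k h]
    show Gm (-k - 1, -j, -i - 1) = (-i - 1, -(k+1), -(j-1) - 1)
    rw [Gm_pos (-k-1) (-j) (-i-1) (by omega)]
    exact triple_ext _ _ _ _ _ _ rfl (by ring) (by ring)

lemma tau_Gm_iter (n : ℕ) (w : ℤ × ℤ × ℤ) : Gm^[n] (tau w) = tau (Gi^[n] w) := by
  induction n with
  | zero => rfl
  | succ n ih =>
    rw [Function.iterate_succ_apply', ih, tau_Gm, Function.iterate_succ_apply']

lemma tau_inj (w w' : ℤ × ℤ × ℤ) (h : tau w = tau w') : w = w' := by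
  obtain ⟨i, j, k⟩ := w; obtain ⟨i', j', k'⟩ := w'
  simp only [tau, Prod.mk.injEq] at h
  exact triple_ext _ _ _ _ _ _ (by omega) (by omega) (by omega)

lemma Gi_iter_fixed_iff (n : ℕ) (w : ℤ × ℤ × ℤ) : Gi^[n] w = w ↔ Gm^[n] w = w := by
  constructor
  · intro h
    conv_lhs => rw [← h]
    exact (Function.LeftInverse.iterate Gm_Gi n) w
  · intro h
    conv_lhs => rw [← h]
    exact (Function.LeftInverse.iterate Gi_Gm n) w

lemma tau_fixed_iff (n : ℕ) (w : ℤ × ℤ × ℤ) : Gm^[n] (tau w) = tau w ↔ Gm^[n] w = w := by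
  rw [tau_Gm_iter]
  constructor
  · intro h
    exact (Gi_iter_fixed_iff n w).mp (tau_inj _ _ h)
  · intro h
    rw [(Gi_iter_fixed_iff n w).mpr h]

/-- Master combinatorial result: every integer triple with coordinate sum `0`, `-1` or `-2`
is `Gm`-periodic, with minimal period of the form `3m+1` (characterized by divisibility). -/
lemma Gm_period (w : ℤ × ℤ × ℤ)
    (hw : w.1 + w.2.1 + w.2.2 = 0 ∨ w.1 + w.2.1 + w.2.2 = -1 ∨ w.1 + w.2.1 + w.2.2 = -2) :
    ∃ m : ℕ, ∀ n : ℕ, (Gm^[n] w = w ↔ (3*m+1) ∣ n) := by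
  have main : ∀ (e : ℤ), (e = 0 ∨ e = 1) → ∀ w' : ℤ × ℤ × ℤ, w'.1 + w'.2.1 + w'.2.2 = -e →
      ∃ m : ℕ, ∀ n : ℕ, (Gm^[n] w' = w' ↔ (3*m+1) ∣ n) := by
    intro e he w' hw'
    obtain ⟨r, t, hr, h0, h1, hc⟩ := cyc_cover e he w' hw'
    refine ⟨(2*r + e).toNat, fun n => ?_⟩
    rw [← hc]
    rw [cyc_period_iff e r t he hr h0 h1 n]
    have hcast : ((3 * (2*r + e).toNat + 1 : ℕ) : ℤ) = 6*r + 3*e + 1 := by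
      have : ((2*r + e).toNat : ℤ) = 2*r + e := Int.toNat_of_nonneg (by rcases he with h | h <;> omega)
      push_cast
      omega
    rw [← hcast]
    exact Int.natCast_dvd_natCast
  rcases hw with hw | hw | hw
  · exact main 0 (Or.inl rfl) w hw
  · exact main 1 (Or.inr rfl) w hw
  · obtain ⟨m, hm⟩ := main 0 (Or.inl rfl) (tau w) (by simp only [tau]; omega)
    exact ⟨m, fun n => (tau_fixed_iff n w).symm.trans (hm n)⟩

/-! ### Real coordinates -/

lemma rtriple_ext (a b c a' b' c' : ℝ) (h1 : a = a') (h2 : b = b') (h3 : c = c') :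
    ((a, b, c) : ℝ × ℝ × ℝ) = (a', b', c') := by subst h1; subst h2; subst h3; rfl

noncomputable def abc (q : ℝ × ℝ) : ℝ × ℝ × ℝ :=
  ((q.1 - q.2 * Real.sqrt 3 / 3) / 2, (1 - q.1 - q.2 * Real.sqrt 3 / 3) / 2,
    q.2 * Real.sqrt 3 / 3)

noncomputable def Tm (P : ℝ × ℝ × ℝ) : ℝ × ℝ × ℝ :=
  if 0 ≤ P.2.2 then (P.2.2, P.1, P.2.1) else (P.2.2, P.1 + 1, P.2.1 - 1)

lemma Tm_pos (P : ℝ × ℝ × ℝ) (h : 0 ≤ P.2.2) : Tm P = (P.2.2, P.1, P.2.1) := if_pos h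

lemma Tm_neg (P : ℝ × ℝ × ℝ) (h : ¬ 0 ≤ P.2.2) : Tm P = (P.2.2, P.1 + 1, P.2.1 - 1) := if_neg h

lemma sqrt3_sq : Real.sqrt 3 ^ 2 = 3 := Real.sq_sqrt (by norm_num)

lemma sqrt3_pos : 0 < Real.sqrt 3 := Real.sqrt_pos.mpr (by norm_num)

lemma abc22_nonneg_iff (q : ℝ × ℝ) : 0 ≤ (abc q).2.2 ↔ 0 ≤ q.2 := by
  show 0 ≤ q.2 * Real.sqrt 3 / 3 ↔ 0 ≤ q.2
  constructor
  · intro hc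
    by_contra h
    push_neg at h
    have : q.2 * Real.sqrt 3 < 0 := mul_neg_of_neg_of_pos h sqrt3_pos
    linarith
  · intro h
    have := mul_nonneg h sqrt3_pos.le
    linarith

lemma abc_F (q : ℝ × ℝ) : abc (F q) = Tm (abc q) := by
  have hS3 := sqrt3_sq
  by_cases h : 0 ≤ q.2
  · rw [Tm_pos (abc q) ((abc22_nonneg_iff q).mpr h)]
    have hs : s q.2 = 1 := if_pos h
    simp only [abc, F, hs]
    refine rtriple_ext _ _ _ _ _ _ ?_ ?_ ?_
    · linear_combination ((q.1 - 1)/12) * hS3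
    · linear_combination ((q.1 - 1)/12) * hS3
    · linear_combination (-(q.1 - 1)/6) * hS3
  · rw [Tm_neg (abc q) (fun hc => h ((abc22_nonneg_iff q).mp hc))]
    have hs : s q.2 = -1 := if_neg h
    simp only [abc, F, hs]
    refine rtriple_ext _ _ _ _ _ _ ?_ ?_ ?_
    · linear_combination ((q.1 + 1)/12) * hS3
    · linear_combination ((q.1 + 1)/12) * hS3
    · linear_combination (-(q.1 + 1)/6) * hS3

noncomputable def IP (P : ℝ × ℝ × ℝ) : ℤ × ℤ × ℤ := (⌊P.1⌋, ⌊P.2.1⌋, ⌊P.2.2⌋)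

noncomputable def FR (P : ℝ × ℝ × ℝ) : ℝ × ℝ × ℝ :=
  (Int.fract P.1, Int.fract P.2.1, Int.fract P.2.2)

def rot (P : ℝ × ℝ × ℝ) : ℝ × ℝ × ℝ := (P.2.2, P.1, P.2.1)

lemma IP_Tm (P : ℝ × ℝ × ℝ) : IP (Tm P) = Gm (IP P) := by
  by_cases h : 0 ≤ P.2.2
  · rw [Tm_pos P h]
    show (⌊P.2.2⌋, ⌊P.1⌋, ⌊P.2.1⌋) = Gm (⌊P.1⌋, ⌊P.2.1⌋, ⌊P.2.2⌋)
    rw [Gm_pos _ _ _ (Int.floor_nonneg.mpr h)]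
  · rw [Tm_neg P h]
    show (⌊P.2.2⌋, ⌊P.1 + 1⌋, ⌊P.2.1 - 1⌋) = Gm (⌊P.1⌋, ⌊P.2.1⌋, ⌊P.2.2⌋)
    rw [Gm_neg _ _ _ (fun hc => h (Int.floor_nonneg.mp hc))]
    have e1 : ⌊P.1 + 1⌋ = ⌊P.1⌋ + 1 := by exact_mod_cast Int.floor_add_intCast P.1 1
    have e2 : ⌊P.2.1 - 1⌋ = ⌊P.2.1⌋ - 1 := by exact_mod_cast Int.floor_sub_intCast P.2.1 1
    rw [e1, e2]

lemma FR_Tm (P : ℝ × ℝ × ℝ) : FR (Tm P) = rot (FR P) := by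
  by_cases h : 0 ≤ P.2.2
  · rw [Tm_pos P h]; rfl
  · rw [Tm_neg P h]
    show (Int.fract P.2.2, Int.fract (P.1 + 1), Int.fract (P.2.1 - 1))
        = (Int.fract P.2.2, Int.fract P.1, Int.fract P.2.1)
    have e1 : Int.fract (P.1 + 1) = Int.fract P.1 := by exact_mod_cast Int.fract_add_intCast P.1 1
    have e2 : Int.fract (P.2.1 - 1) = Int.fract P.2.1 := by exact_mod_cast Int.fract_sub_intCast P.2.1 1
    rw [e1, e2]

lemma abc_iter (n : ℕ) (q : ℝ × ℝ) : abc (F^[n] q) = Tm^[n] (abc q) := by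
  induction n with
  | zero => rfl
  | succ n ih => rw [Function.iterate_succ_apply', Function.iterate_succ_apply', abc_F, ih]

lemma IP_iter (n : ℕ) (P : ℝ × ℝ × ℝ) : IP (Tm^[n] P) = Gm^[n] (IP P) := by
  induction n with
  | zero => rfl
  | succ n ih => rw [Function.iterate_succ_apply', Function.iterate_succ_apply', IP_Tm, ih]

lemma FR_iter (n : ℕ) (P : ℝ × ℝ × ℝ) : FR (Tm^[n] P) = rot^[n] (FR P) := by
  induction n with
  | zero => rfl
  | succ n ih => rw [Function.iterate_succ_apply', Function.iterate_succ_apply', FR_Tm, ih]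

lemma eq_of_IP_FR (P Q : ℝ × ℝ × ℝ) (h1 : IP P = IP Q) (h2 : FR P = FR Q) : P = Q := by
  have k1 : ((IP P).1 : ℝ) + (FR P).1 = P.1 := Int.floor_add_fract P.1
  have k2 : ((IP P).2.1 : ℝ) + (FR P).2.1 = P.2.1 := Int.floor_add_fract P.2.1
  have k3 : ((IP P).2.2 : ℝ) + (FR P).2.2 = P.2.2 := Int.floor_add_fract P.2.2
  have l1 : ((IP Q).1 : ℝ) + (FR Q).1 = Q.1 := Int.floor_add_fract Q.1
  have l2 : ((IP Q).2.1 : ℝ) + (FR Q).2.1 = Q.2.1 := Int.floor_add_fract Q.2.1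
  have l3 : ((IP Q).2.2 : ℝ) + (FR Q).2.2 = Q.2.2 := Int.floor_add_fract Q.2.2
  have : P = (P.1, P.2.1, P.2.2) := rfl
  rw [this, show Q = (Q.1, Q.2.1, Q.2.2) from rfl]
  refine rtriple_ext _ _ _ _ _ _ ?_ ?_ ?_
  · rw [← k1, ← l1, h1, h2]
  · rw [← k2, ← l2, h1, h2]
  · rw [← k3, ← l3, h1, h2]

lemma abc_inj (p q : ℝ × ℝ) (h : abc p = abc q) : p = q := by
  have h3 := congrArg (fun P : ℝ × ℝ × ℝ => P.2.2) h
  have h1 := congrArg (fun P : ℝ × ℝ × ℝ => P.1) h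
  simp only [abc] at h3 h1
  have hy : p.2 = q.2 := by
    have h3' : p.2 * Real.sqrt 3 = q.2 * Real.sqrt 3 := by linarith
    exact mul_right_cancel₀ (ne_of_gt sqrt3_pos) h3' 
  have hx : p.1 = q.1 := by
    rw [hy] at h1
    linarith
  exact Prod.ext_iff.mpr ⟨hx, hy⟩

lemma F_iter_iff (q : ℝ × ℝ) (n : ℕ) :
    F^[n] q = q ↔
      (Gm^[n] (IP (abc q)) = IP (abc q) ∧ rot^[n] (FR (abc q)) = FR (abc q)) := by
  constructor
  · intro h
    constructor
    · rw [← IP_iter, ← abc_iter, h]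
    · rw [← FR_iter, ← abc_iter, h]
  · rintro ⟨h1, h2⟩
    have : Tm^[n] (abc q) = abc q := by
      refine eq_of_IP_FR _ _ ?_ ?_
      · rw [IP_iter, h1]
      · rw [FR_iter, h2]
    exact abc_inj _ _ (by rw [abc_iter, this])

lemma rot_iter_three (k : ℕ) (P : ℝ × ℝ × ℝ) : rot^[3*k] P = P := by
  induction k with
  | zero => rfl
  | succ k ih =>
    have : 3*(k+1) = 3*k + 3 := by ring
    rw [this, Function.iterate_add_apply]
    have h3 : rot^[3] P = P := rfl
    rw [h3, ih]

lemma rot_iter_fixed_iff (n : ℕ) (P : ℝ × ℝ × ℝ) :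
    rot^[n] P = P ↔ (3 ∣ n ∨ (P.1 = P.2.1 ∧ P.2.1 = P.2.2)) := by
  constructor
  · intro h
    have hd : n = 3*(n/3) + n % 3 := by omega
    rw [hd, Function.iterate_add_apply] at h
    have hmod : n % 3 = 0 ∨ n % 3 = 1 ∨ n % 3 = 2 := by omega
    rcases hmod with hm | hm | hm
    · left; omega
    · right
      rw [hm] at h
      rw [rot_iter_three] at h
      have e1 := congrArg (fun P : ℝ × ℝ × ℝ => P.1) h
      have e2 := congrArg (fun P : ℝ × ℝ × ℝ => P.2.1) h
      have e3 := congrArg (fun P : ℝ × ℝ × ℝ => P.2.2) h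
      simp only [Function.iterate_one, rot] at e1 e2 e3
      exact ⟨e2, e3⟩
    · right
      rw [hm] at h
      rw [rot_iter_three] at h
      have e1 := congrArg (fun P : ℝ × ℝ × ℝ => P.1) h
      have e2 := congrArg (fun P : ℝ × ℝ × ℝ => P.2.1) h
      have e3 := congrArg (fun P : ℝ × ℝ × ℝ => P.2.2) h
      simp only [show (2:ℕ) = 1 + 1 from rfl, Function.iterate_add_apply,
        Function.iterate_one, rot] at e1 e2 e3
      exact ⟨e1.symm, e2.symm⟩
  · intro h
    rcases h with ⟨k, hk⟩ | ⟨h1, h2⟩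
    · rw [hk]; exact rot_iter_three k P
    · have hfix : rot P = P := by
        obtain ⟨a, b, c⟩ := P
        simp only at h1 h2
        show ((c, a, b) : ℝ × ℝ × ℝ) = (a, b, c)
        rw [h1, h2]
      exact Function.iterate_fixed hfix n

lemma abc_sum (q : ℝ × ℝ) : (abc q).1 + (abc q).2.1 + (abc q).2.2 = 1/2 := by
  simp only [abc]; ring

lemma IP_sum (q : ℝ × ℝ) :
    (IP (abc q)).1 + (IP (abc q)).2.1 + (IP (abc q)).2.2 = 0 ∨
    (IP (abc q)).1 + (IP (abc q)).2.1 + (IP (abc q)).2.2 = -1 ∨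
    (IP (abc q)).1 + (IP (abc q)).2.1 + (IP (abc q)).2.2 = -2 := by
  set P := abc q with hP
  have hsum := abc_sum q
  have k1 : ((IP P).1 : ℝ) + (FR P).1 = P.1 := Int.floor_add_fract P.1
  have k2 : ((IP P).2.1 : ℝ) + (FR P).2.1 = P.2.1 := Int.floor_add_fract P.2.1
  have k3 : ((IP P).2.2 : ℝ) + (FR P).2.2 = P.2.2 := Int.floor_add_fract P.2.2
  have f1 := Int.fract_nonneg P.1
  have f2 := Int.fract_nonneg P.2.1
  have f3 := Int.fract_nonneg P.2.2
  have g1 := Int.fract_lt_one P.1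
  have g2 := Int.fract_lt_one P.2.1
  have g3 := Int.fract_lt_one P.2.2
  set S : ℤ := (IP P).1 + (IP P).2.1 + (IP P).2.2 with hS
  rw [← hP] at hsum
  have hcast : (S : ℝ) + ((FR P).1 + (FR P).2.1 + (FR P).2.2) = 1/2 := by
    have : (S : ℝ) = ((IP P).1 : ℝ) + ((IP P).2.1 : ℝ) + ((IP P).2.2 : ℝ) := by
      rw [hS]; push_cast; ring
    rw [this]
    linarith [k1, k2, k3, hsum]
  have hf1 : 0 ≤ (FR P).1 := f1
  have hf2 : 0 ≤ (FR P).2.1 := f2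
  have hf3 : 0 ≤ (FR P).2.2 := f3
  have hg1 : (FR P).1 < 1 := g1
  have hg2 : (FR P).2.1 < 1 := g2
  have hg3 : (FR P).2.2 < 1 := g3
  have hub : (S : ℝ) < 1 := by linarith
  have hlb : (-3 : ℝ) < (S : ℝ) := by linarith
  have hub' : S < 1 := by exact_mod_cast hub
  have hlb' : (-3 : ℤ) < S := by exact_mod_cast hlb
  omega

lemma minimalPeriod_eq_of_iff {α : Type*} (f : α → α) (x : α) (p : ℕ) (hp : 0 < p)
    (h : ∀ n : ℕ, f^[n] x = x ↔ p ∣ n) : Function.minimalPeriod f x = p := by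
  have hper : Function.IsPeriodicPt f p x := (h p).mpr dvd_rfl
  have h2 : p ∣ Function.minimalPeriod f x := (h _).mp Function.iterate_minimalPeriod
  exact Nat.dvd_antisymm hper.minimalPeriod_dvd h2

/-- Master lemma: minimal period of any point. -/
lemma master (q : ℝ × ℝ) : ∃ m : ℕ,
    (Function.minimalPeriod F q = 3*m+1 ∧
      ((FR (abc q)).1 = (FR (abc q)).2.1 ∧ (FR (abc q)).2.1 = (FR (abc q)).2.2)) ∨
    Function.minimalPeriod F q = 9*m+3 := by
  obtain ⟨m, hm⟩ := Gm_period (IP (abc q)) (IP_sum q)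
  by_cases heq : (FR (abc q)).1 = (FR (abc q)).2.1 ∧ (FR (abc q)).2.1 = (FR (abc q)).2.2
  · refine ⟨m, Or.inl ⟨?_, heq⟩⟩
    refine minimalPeriod_eq_of_iff F q (3*m+1) (by omega) (fun n => ?_)
    rw [F_iter_iff q n, hm n]
    constructor
    · exact fun h => h.1
    · exact fun h => ⟨h, (rot_iter_fixed_iff n _).mpr (Or.inr heq)⟩
  · refine ⟨m, Or.inr ?_⟩
    have hco : Nat.Coprime 3 (3*m+1) := by
      have h1 : (3*m+1) % 3 = 1 := by omega
      show Nat.gcd 3 (3*m+1) = 1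
      rw [Nat.gcd_rec, h1]
      simp
    have key : Function.minimalPeriod F q = 3*(3*m+1) :=
      minimalPeriod_eq_of_iff F q (3*(3*m+1)) (by omega) (fun n => by
        rw [F_iter_iff q n, hm n, rot_iter_fixed_iff n _]
        constructor
        · rintro ⟨h1, h2 | h2⟩
          · exact Nat.Coprime.mul_dvd_of_dvd_of_dvd hco h2 h1
          · exact absurd h2 heq
        · intro h
          exact ⟨dvd_trans (Dvd.intro_left 3 rfl) h, Or.inl (dvd_trans ⟨3*m+1, rfl⟩ h)⟩)
    rw [key]; omega

lemma S_FR (q : ℝ × ℝ) :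
    (((IP (abc q)).1 + (IP (abc q)).2.1 + (IP (abc q)).2.2 : ℤ) : ℝ)
      + ((FR (abc q)).1 + (FR (abc q)).2.1 + (FR (abc q)).2.2) = 1/2 := by
  set P := abc q with hP
  have hsum := abc_sum q
  rw [← hP] at hsum
  have k1 : ((IP P).1 : ℝ) + (FR P).1 = P.1 := Int.floor_add_fract P.1
  have k2 : ((IP P).2.1 : ℝ) + (FR P).2.1 = P.2.1 := Int.floor_add_fract P.2.1
  have k3 : ((IP P).2.2 : ℝ) + (FR P).2.2 = P.2.2 := Int.floor_add_fract P.2.2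
  push_cast
  linarith [k1, k2, k3, hsum]

lemma not_all_eq_of_zero (q : ℝ × ℝ)
    (hz : (FR (abc q)).1 = 0 ∨ (FR (abc q)).2.1 = 0 ∨ (FR (abc q)).2.2 = 0) :
    ¬ ((FR (abc q)).1 = (FR (abc q)).2.1 ∧ (FR (abc q)).2.1 = (FR (abc q)).2.2) := by
  rintro ⟨h1, h2⟩
  have hall : (FR (abc q)).1 = 0 ∧ (FR (abc q)).2.1 = 0 ∧ (FR (abc q)).2.2 = 0 := by
    rcases hz with h | h | h
    · exact ⟨h, by rw [← h1, h], by rw [← h2, ← h1, h]⟩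
    · exact ⟨by rw [h1, h], h, by rw [← h2, h]⟩
    · exact ⟨by rw [h1, h2, h], by rw [h2, h], h⟩
  have hS := S_FR q
  rw [hall.1, hall.2.1, hall.2.2] at hS
  have h2S : (2 * ((IP (abc q)).1 + (IP (abc q)).2.1 + (IP (abc q)).2.2) : ℤ) = 1 := by
    have h2 : ((2 * ((IP (abc q)).1 + (IP (abc q)).2.1 + (IP (abc q)).2.2) : ℤ) : ℝ) = 1 := by
      push_cast
      push_cast at hS
      linarith
    exact_mod_cast h2
  omega

lemma grid_fract (q : ℝ × ℝ) (hq : q ∈ grid) :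
    (FR (abc q)).1 = 0 ∨ (FR (abc q)).2.1 = 0 ∨ (FR (abc q)).2.2 = 0 := by
  have hS3 := sqrt3_sq
  rcases hq with ⟨k, hk⟩ | ⟨l, hl⟩ | ⟨m, hm⟩
  · left
    have : (abc q).1 = (k : ℝ) := by
      simp only [abc]
      rw [hk]
      linear_combination (-(q.1 - 2*k)/6) * hS3
    show Int.fract (abc q).1 = 0
    rw [this, Int.fract_intCast]
  · right; right
    have : (abc q).2.2 = (l : ℝ) := by
      simp only [abc]
      rw [hl]
      linear_combination ((l : ℝ)/3) * hS3
    show Int.fract (abc q).2.2 = 0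
    rw [this, Int.fract_intCast]
  · right; left
    have : (abc q).2.1 = ((-m : ℤ) : ℝ) := by
      simp only [abc]
      rw [hm]
      push_cast
      linear_combination ((q.1 - 2*m - 1)/6) * hS3
    show Int.fract (abc q).2.1 = 0
    rw [this, Int.fract_intCast]

lemma abc_mk (A C : ℝ) : abc (2*A + C, C * Real.sqrt 3) = (A, 1/2 - A - C, C) := by
  have hS3 := sqrt3_sq
  simp only [abc]
  refine rtriple_ext _ _ _ _ _ _ ?_ ?_ ?_
  · linear_combination (-C/6) * hS3
  · linear_combination (-C/6) * hS3
  · linear_combination (C/3) * hS3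

lemma construct (fa fb fc : ℝ) (ia ib ic : ℤ)
    (ha : 0 ≤ fa ∧ fa < 1) (hb : 0 ≤ fb ∧ fb < 1) (hc : 0 ≤ fc ∧ fc < 1)
    (hsum : (fa + ia) + (fb + ib) + (fc + ic) = 1/2) :
    ∃ q : ℝ × ℝ, IP (abc q) = (ia, ib, ic) ∧ FR (abc q) = (fa, fb, fc) := by
  refine ⟨(2*(fa + ia) + (fc + ic), (fc + ic) * Real.sqrt 3), ?_, ?_⟩ <;>
  · have habc : abc (2*(fa + ia) + (fc + ic), (fc + ic) * Real.sqrt 3)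
        = (fa + ia, fb + ib, fc + ic) := by
      rw [abc_mk]
      refine rtriple_ext _ _ _ _ _ _ rfl (by linarith) rfl
    rw [habc]
    first
    | · show (⌊fa + (ia:ℝ)⌋, ⌊fb + (ib:ℝ)⌋, ⌊fc + (ic:ℝ)⌋) = (ia, ib, ic)
        refine triple_ext _ _ _ _ _ _ ?_ ?_ ?_ <;>
          rw [Int.floor_add_intCast, Int.floor_eq_zero_iff.mpr (by constructor <;> simp_all <;> linarith), zero_add]
    | · show (Int.fract (fa + (ia:ℝ)), Int.fract (fb + (ib:ℝ)), Int.fract (fc + (ic:ℝ)))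
          = (fa, fb, fc)
        refine rtriple_ext _ _ _ _ _ _ ?_ ?_ ?_ <;>
          rw [Int.fract_add_intCast, Int.fract_eq_self.mpr (by constructor <;> simp_all <;> linarith)]

lemma minper_exact (q : ℝ × ℝ) (e rr t0 : ℤ) (L : ℕ) (he : e = 0 ∨ e = 1) (hr : 0 ≤ rr)
    (h0 : 0 ≤ t0) (h1 : t0 ≤ 6*rr + 3*e) (hL : (L : ℤ) = 6*rr + 3*e + 1)
    (hIP : IP (abc q) = cyc e rr t0) :
    (((FR (abc q)).1 = (FR (abc q)).2.1 ∧ (FR (abc q)).2.1 = (FR (abc q)).2.2) →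
        Function.minimalPeriod F q = L) ∧
    (¬((FR (abc q)).1 = (FR (abc q)).2.1 ∧ (FR (abc q)).2.1 = (FR (abc q)).2.2) →
        Function.minimalPeriod F q = 3*L) := by
  have hiff : ∀ n : ℕ, Gm^[n] (IP (abc q)) = IP (abc q) ↔ L ∣ n := by
    intro n
    rw [hIP, cyc_period_iff e rr t0 he hr h0 h1 n, ← hL]
    exact Int.natCast_dvd_natCast
  have hLpos : 0 < L := by omega
  have hLmod : L % 3 = 1 := by rcases he with he | he <;> omega
  constructor
  · intro heq
    refine minimalPeriod_eq_of_iff F q L hLpos (fun n => ?_)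
    rw [F_iter_iff q n, hiff n]
    exact ⟨fun h => h.1, fun h => ⟨h, (rot_iter_fixed_iff n _).mpr (Or.inr heq)⟩⟩
  · intro hne
    have hco : Nat.Coprime 3 L := by
      show Nat.gcd 3 L = 1
      rw [Nat.gcd_rec, hLmod]
      simp
    refine minimalPeriod_eq_of_iff F q (3*L) (by omega) (fun n => ?_)
    rw [F_iter_iff q n, hiff n, rot_iter_fixed_iff n _]
    constructor
    · rintro ⟨hd, h3 | hal⟩
      · exact Nat.Coprime.mul_dvd_of_dvd_of_dvd hco h3 hd
      · exact absurd hal hne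
    · intro h
      exact ⟨dvd_trans (dvd_mul_left L 3) h, Or.inl (dvd_trans (dvd_mul_right 3 L) h)⟩

lemma cyc_zero (e r : ℤ) (hr : 0 ≤ r) : cyc e r 0 = (0, r, -r - e) := by
  rw [cyc_eval1 e r 0 hr]
  exact triple_ext _ _ _ _ _ _ rfl (by ring) (by ring)

lemma exists_3n1 (n : ℕ) : ∃ q : ℝ × ℝ, Function.minimalPeriod F q = 3*n+1 := by
  rcases Nat.even_or_odd n with ⟨r, hrn⟩ | ⟨r, hrn⟩
  · -- n = 2r : triple (1/6, r + 1/6, 1/6 - r)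
    obtain ⟨q, hIP, hFR⟩ := construct (1/6) (1/6) (1/6) 0 r (-r)
      (by norm_num) (by norm_num) (by norm_num) (by push_cast; ring)
    refine ⟨q, ?_⟩
    have hIP' : IP (abc q) = cyc 0 r 0 := by rw [cyc_zero 0 r (by omega), hIP]; try exact triple_ext _ _ _ _ _ _ rfl rfl (by ring)
    have := (minper_exact q 0 r 0 (3*n+1) (Or.inl rfl) (by omega) le_rfl (by omega)
      (by push_cast; omega) hIP').1
    apply this
    simp [hFR]
  · -- n = 2r+1 : triple (1/2, r + 1/2, -r - 1/2)
    obtain ⟨q, hIP, hFR⟩ := construct (1/2) (1/2) (1/2) 0 r (-r-1)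
      (by norm_num) (by norm_num) (by norm_num) (by push_cast; ring)
    refine ⟨q, ?_⟩
    have hIP' : IP (abc q) = cyc 1 r 0 := by rw [cyc_zero 1 r (by omega), hIP]; try exact triple_ext _ _ _ _ _ _ rfl rfl (by ring)
    have := (minper_exact q 1 r 0 (3*n+1) (Or.inr rfl) (by omega) le_rfl (by omega)
      (by push_cast; omega) hIP').1
    apply this
    simp [hFR]

lemma exists_9n3 (n : ℕ) : ∃ q : ℝ × ℝ, Function.minimalPeriod F q = 9*n+3 := by
  rcases Nat.even_or_odd n with ⟨r, hrn⟩ | ⟨r, hrn⟩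
  · -- n = 2r : triple (0, r + 1/4, 1/4 - r)
    obtain ⟨q, hIP, hFR⟩ := construct 0 (1/4) (1/4) 0 r (-r)
      (by norm_num) (by norm_num) (by norm_num) (by push_cast; ring)
    refine ⟨q, ?_⟩
    have hIP' : IP (abc q) = cyc 0 r 0 := by rw [cyc_zero 0 r (by omega), hIP]; try exact triple_ext _ _ _ _ _ _ rfl rfl (by ring)
    have h3n : (9*n+3 : ℕ) = 3*(3*(r+r)+1) := by omega
    rw [h3n]
    have := (minper_exact q 0 r 0 (3*(r+r)+1) (Or.inl rfl) (by omega) le_rfl (by omega)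
      (by push_cast; omega) hIP').2
    apply this
    rw [hFR]
    rintro ⟨ha, -⟩
    norm_num at ha
  · -- n = 2r+1 : triple (1/4, r + 1/2, -r - 1/4)
    obtain ⟨q, hIP, hFR⟩ := construct (1/4) (1/2) (3/4) 0 r (-r-1)
      (by norm_num) (by norm_num) (by norm_num) (by push_cast; ring)
    refine ⟨q, ?_⟩
    have hIP' : IP (abc q) = cyc 1 r 0 := by rw [cyc_zero 1 r (by omega), hIP]; try exact triple_ext _ _ _ _ _ _ rfl rfl (by ring)
    have h3n : (9*n+3 : ℕ) = 3*(3*(r+r+1)+1) := by omega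
    rw [h3n]
    have := (minper_exact q 1 r 0 (3*(r+r+1)+1) (Or.inr rfl) (by omega) le_rfl (by omega)
      (by push_cast; omega) hIP').2
    apply this
    rw [hFR]
    rintro ⟨ha, -⟩
    norm_num at ha

end PwP

/-- `F` is pointwise periodic; every grid point has minimal period `9n+3`
for some `n`, and the set of minimal periods is `{3n+1} ∪ {9n+3}`. -/
theorem pointwise_periodic_two_pi_div_three :
    (∀ q : ℝ × ℝ, ∃ p : ℕ, 1 ≤ p ∧ F^[p] q = q) ∧
    (∀ q ∈ grid, ∃ n : ℕ, Function.minimalPeriod F q = 9 * n + 3) ∧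
    {p : ℕ | ∃ q : ℝ × ℝ, Function.minimalPeriod F q = p} =
      {p : ℕ | ∃ n : ℕ, p = 3 * n + 1} ∪ {p : ℕ | ∃ n : ℕ, p = 9 * n + 3} := by
  refine ⟨?_, ?_, ?_⟩
  · intro q
    obtain ⟨m, hm⟩ := PwP.master q
    rcases hm with ⟨h, -⟩ | h
    · exact ⟨3*m+1, by omega, by rw [← h]; exact Function.iterate_minimalPeriod⟩
    · exact ⟨9*m+3, by omega, by rw [← h]; exact Function.iterate_minimalPeriod⟩
  · intro q hq
    obtain ⟨m, hm⟩ := PwP.master q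
    rcases hm with ⟨-, heq⟩ | h
    · exact absurd heq (PwP.not_all_eq_of_zero q (PwP.grid_fract q hq))
    · exact ⟨m, h⟩
  · ext p
    simp only [Set.mem_setOf_eq, Set.mem_union]
    constructor
    · rintro ⟨q, rfl⟩
      obtain ⟨m, hm⟩ := PwP.master q
      rcases hm with ⟨h, -⟩ | h
      · exact Or.inl ⟨m, h⟩
      · exact Or.inr ⟨m, h⟩
    · rintro (⟨n, rfl⟩ | ⟨n, rfl⟩)
      · exact PwP.exists_3n1 n
      · exact PwP.exists_9n3 n
end
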